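/- arXiv:1603.00336 — 12 statements merged into one kernel-verified Lean document; each statement's English description precedes it below -/
import Mathlib

section
/- Let V be a Hilbert space, V_r ⊆ V a closed subspace, u ∈ V, and let u_r^⊥ be the orthogonal projection of u onto V_r. If u_r ∈ V_r satisfies ‖u_r^⊥ − u_r‖_V ≤ δ ‖u − u_r‖_V for some δ ∈ [0,1), then ‖u − u_r‖_V ≤ (1 − δ²)^{-1/2} ‖u − u_r^⊥‖_V. -/
noncomputable section
open InnerProductSpace
open scoped RealInnerProductSpace

/-! Since `u - P u ⊥ K`, Pythagoras gives `‖u - v‖² = ‖u - P u‖² + ‖P u - v‖²` for `v ∈ K`, and the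
hypothesis `‖P u - v‖ ≤ δ ‖u - v‖` turns this into `(1 - δ²) ‖u - v‖² ≤ ‖u - P u‖²`. -/

theorem Submodule.norm_sub_sq_eq_norm_sub_starProjection_sq_add {𝕜 E : Type*} [RCLike 𝕜]
    [NormedAddCommGroup E] [InnerProductSpace 𝕜 E] (K : Submodule 𝕜 E)
    [K.HasOrthogonalProjection] (u : E) {v : E} (hv : v ∈ K) :
    ‖u - v‖ ^ 2 = ‖u - K.starProjection u‖ ^ 2 + ‖K.starProjection u - v‖ ^ 2 := by
  have horth : ⟪u - K.starProjection u, K.starProjection u - v⟫_𝕜 = 0 :=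
    K.starProjection_inner_eq_zero u _ (K.sub_mem (K.starProjection_apply_mem u) hv)
  simpa only [sq, sub_add_sub_cancel] using
    norm_add_sq_eq_norm_sq_add_norm_sq_of_inner_eq_zero _ _ horth

theorem le_inv_sqrt_mul_of_mul_sq_le_sq {t a b : ℝ} (ht : 0 < t) (hb : 0 ≤ b)
    (h : t * a ^ 2 ≤ b ^ 2) : a ≤ (√t)⁻¹ * b := by
  rw [le_inv_mul_iff₀ (Real.sqrt_pos.2 ht)]
  have hsq : (√t * a) ^ 2 ≤ b ^ 2 := by rwa [mul_pow, Real.sq_sqrt ht.le]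
  exact (abs_le_of_sq_le_sq hsq hb).trans' (le_abs_self _)

theorem stmt_1_general {V : Type*}
    [NormedAddCommGroup V] [InnerProductSpace ℝ V]
    (Vr : Submodule ℝ V) [CompleteSpace Vr]
    (u ur : V) (hur : ur ∈ Vr) (δ : ℝ) (hδ0 : 0 ≤ δ) (hδ1 : δ < 1)
    (h : ‖(Submodule.orthogonalProjectionOnto Vr u : V) - ur‖ ≤ δ * ‖u - ur‖) :
    ‖u - ur‖ ≤ (Real.sqrt (1 - δ ^ 2))⁻¹ * ‖u - (Submodule.orthogonalProjectionOnto Vr u : V)‖ := by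
  rw [Submodule.coe_orthogonalProjectionOnto_apply] at h ⊢
  have hpyth := Vr.norm_sub_sq_eq_norm_sub_starProjection_sq_add u hur
  have hsq : ‖Vr.starProjection u - ur‖ ^ 2 ≤ (δ * ‖u - ur‖) ^ 2 :=
    pow_le_pow_left₀ (norm_nonneg _) h 2
  rw [mul_pow] at hsq
  refine le_inv_sqrt_mul_of_mul_sq_le_sq (by nlinarith) (norm_nonneg _) ?_
  linarith

theorem stmt_1 {V : Type*}
    [NormedAddCommGroup V] [InnerProductSpace ℝ V] [CompleteSpace V]
    (Vr : Submodule ℝ V) [CompleteSpace Vr]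
    (u ur : V) (hur : ur ∈ Vr) (δ : ℝ) (hδ0 : 0 ≤ δ) (hδ1 : δ < 1)
    (h : ‖(Submodule.orthogonalProjectionOnto Vr u : V) - ur‖ ≤ δ * ‖u - ur‖) :
    ‖u - ur‖ ≤ (Real.sqrt (1 - δ ^ 2))⁻¹ * ‖u - (Submodule.orthogonalProjectionOnto Vr u : V)‖ :=
  stmt_1_general Vr u ur hur δ hδ0 hδ1 h
end
end

section
/- Let V, W be Hilbert spaces, A ∈ L(V, W') a norm-isomorphism, b ∈ W', u = A⁻¹ b, V_r ⊆ V and W_r ⊆ W finite-dimensional subspaces with the discrete inf-sup constant α_{V_r,W_r} := inf_{0≠v∈V_r} sup_{0≠y∈W_r} ⟨Av, y⟩/(‖v‖_V ‖y‖_W) > 0. Let u_r ∈ V_r be the Petrov-Galerkin solution satisfying ⟨A u_r − b, y⟩ = 0 for all y ∈ W_r. Then ‖u − u_r‖_V ≤ (1 − δ²)^{-1/2} · inf_{v∈V_r} ‖u − v‖_V, where δ = sup_{0≠v∈V_r} inf_{y∈W_r} ‖v − R_V⁻¹ A* y‖_V / ‖v‖_V satisfies δ < 1. -/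
noncomputable section
open InnerProductSpace
open scoped RealInnerProductSpace

/-!
Galerkin orthogonality says that the error `e = u - u_r` is orthogonal to `R_V⁻¹ A* W_r`. For
`w ∈ V_r` this gives `|⟪e, w⟫| = |⟪e, w - R_V⁻¹ A* y⟫| ≤ δ ‖e‖ ‖w‖`, and expanding
`‖e + w‖²` then yields `(1 - δ²) ‖e‖² ≤ ‖u - v‖²` for every `v = u_r - w ∈ V_r`.

`δ < 1` comes from the inf-sup condition: for `v ∈ V_r` there is `y ∈ W_r` with
`⟪v, R_V⁻¹ A* y⟫ = ⟨Av, y⟩ ≥ (α/2) ‖v‖ ‖y‖ ≥ (α / 2‖A‖) ‖v‖ ‖R_V⁻¹ A* y‖`, so the orthogonal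
projection of `v` onto the line through `R_V⁻¹ A* y` leaves a residual of norm at most
`√(1 - (α / 2‖A‖)²) ‖v‖`.
-/

section InnerProductSpace

variable {F : Type*} [NormedAddCommGroup F] [InnerProductSpace ℝ F]

theorem exists_norm_sub_smul_le {v s : F} (hs : s ≠ 0) {c : ℝ} (hc : 0 ≤ c)
    (h : c * (‖v‖ * ‖s‖) ≤ ⟪v, s⟫) : ∃ t : ℝ, ‖v - t • s‖ ≤ √(1 - c ^ 2) * ‖v‖ := by
  have hs' : 0 < ‖s‖ := norm_pos_iff.2 hs
  refine ⟨⟪v, s⟫ / ‖s‖ ^ 2, ?_⟩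
  have hresidual : ‖v - (⟪v, s⟫ / ‖s‖ ^ 2) • s‖ ^ 2 = ‖v‖ ^ 2 - ⟪v, s⟫ ^ 2 / ‖s‖ ^ 2 := by
    rw [norm_sub_sq_real, real_inner_smul_right, norm_smul, mul_pow, Real.norm_eq_abs, sq_abs]
    field_simp
    ring
  have hproj : c ^ 2 * ‖v‖ ^ 2 ≤ ⟪v, s⟫ ^ 2 / ‖s‖ ^ 2 := by
    rw [le_div_iff₀ (by positivity)]
    nlinarith [mul_nonneg hc (mul_nonneg (norm_nonneg v) hs'.le)]
  rw [← Real.sqrt_sq (norm_nonneg v), ← Real.sqrt_mul' _ (sq_nonneg _)]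
  exact Real.le_sqrt_of_sq_le (by rw [hresidual]; linarith)

theorem abs_inner_le_mul_iInf_norm_sub {ι : Sort*} [Nonempty ι] {f : ι → F} {e : F}
    (he : ∀ i, ⟪e, f i⟫ = 0) (w : F) : |⟪e, w⟫| ≤ ‖e‖ * ⨅ i, ‖w - f i‖ := by
  rw [Real.mul_iInf_of_nonneg (norm_nonneg e)]
  refine le_ciInf fun i => ?_
  calc |⟪e, w⟫| = |⟪e, w - f i⟫| := by rw [inner_sub_right, he i, sub_zero]
    _ ≤ ‖e‖ * ‖w - f i‖ := abs_real_inner_le_norm _ _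

theorem one_sub_sq_mul_norm_sq_le_norm_add_sq {e w : F} {δ : ℝ}
    (h : |⟪e, w⟫| ≤ δ * ‖e‖ * ‖w‖) : (1 - δ ^ 2) * ‖e‖ ^ 2 ≤ ‖e + w‖ ^ 2 := by
  rw [norm_add_sq_real]
  nlinarith [(abs_le.1 h).1, sq_nonneg (‖w‖ - δ * ‖e‖)]

end InnerProductSpace

namespace PetrovGalerkin

section InfSup

variable {V W : Type*} [NormedAddCommGroup V] [NormedSpace ℝ V]
  [NormedAddCommGroup W] [NormedSpace ℝ W]

def infSupConstant (A : V →L[ℝ] StrongDual ℝ W) (Vr : Submodule ℝ V) (Wr : Submodule ℝ W) : ℝ :=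
  ⨅ v : {v : Vr // (v : V) ≠ 0}, ⨆ y : {y : Wr // (y : W) ≠ 0},
    A (v.1 : V) (y.1 : W) / (‖(v.1 : V)‖ * ‖(y.1 : W)‖)

variable (A : V →L[ℝ] StrongDual ℝ W) (Wr : Submodule ℝ W)

theorem abs_apply_div_le (x : V) (y : W) : |A x y / (‖x‖ * ‖y‖)| ≤ ‖A‖ := by
  rw [abs_div, abs_of_nonneg (mul_nonneg (norm_nonneg x) (norm_nonneg y))]
  refine div_le_of_le_mul₀ (by positivity) (norm_nonneg A) ?_
  rw [← mul_assoc, ← Real.norm_eq_abs]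
  exact A.le_opNorm₂ x y

theorem neg_opNorm_le_iSup_apply_div (x : V) :
    -‖A‖ ≤ ⨆ y : {y : Wr // (y : W) ≠ 0}, A x (y.1 : W) / (‖x‖ * ‖(y.1 : W)‖) := by
  rcases isEmpty_or_nonempty {y : Wr // (y : W) ≠ 0} with hW | ⟨⟨y⟩⟩
  · rw [Real.iSup_of_isEmpty, neg_nonpos]
    exact norm_nonneg A
  · have hbdd : BddAbove (Set.range fun y : {y : Wr // (y : W) ≠ 0} =>
        A x (y.1 : W) / (‖x‖ * ‖(y.1 : W)‖)) := by
      refine ⟨‖A‖, ?_⟩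
      rintro _ ⟨y, rfl⟩
      exact le_of_abs_le (abs_apply_div_le A x _)
    exact (neg_le_of_abs_le (abs_apply_div_le A x _)).trans (le_ciSup hbdd y)

variable {A Wr} {Vr : Submodule ℝ V}

theorem exists_lt_apply_of_lt_infSupConstant {γ : ℝ} (hγ0 : 0 ≤ γ)
    (hγ : γ < infSupConstant A Vr Wr) (v : Vr) (hv : (v : V) ≠ 0) :
    ∃ y : Wr, γ * (‖(v : V)‖ * ‖(y : W)‖) < A v y := by
  have hle : infSupConstant A Vr Wr ≤ ⨆ y : {y : Wr // (y : W) ≠ 0},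
      A (v : V) (y.1 : W) / (‖(v : V)‖ * ‖(y.1 : W)‖) := by
    unfold infSupConstant
    refine ciInf_le ?_ (⟨v, hv⟩ : {v : Vr // (v : V) ≠ 0})
    refine ⟨-‖A‖, ?_⟩
    rintro _ ⟨v, rfl⟩
    exact neg_opNorm_le_iSup_apply_div A Wr _
  rcases isEmpty_or_nonempty {y : Wr // (y : W) ≠ 0} with hW | hW
  · rw [Real.iSup_of_isEmpty] at hle
    linarith
  obtain ⟨⟨y, hy⟩, hγy⟩ := exists_lt_of_lt_ciSup (hγ.trans_le hle)
  refine ⟨y, ?_⟩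
  rwa [lt_div_iff₀ (by positivity)] at hγy

theorem opNorm_pos_of_infSupConstant_pos (hα : 0 < infSupConstant A Vr Wr) : 0 < ‖A‖ := by
  obtain ⟨⟨v, hv⟩⟩ : Nonempty {v : Vr // (v : V) ≠ 0} := by
    by_contra hV
    have := not_nonempty_iff.1 hV
    rw [infSupConstant, Real.iInf_of_isEmpty] at hα
    exact hα.false
  obtain ⟨y, hy⟩ := exists_lt_apply_of_lt_infSupConstant le_rfl hα v hv
  have hA : A ≠ 0 := fun hA => by simp [hA] at hy
  exact (norm_pos_iff (a := A)).2 hA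

end InfSup

section Adjoint

variable {V W : Type*} [NormedAddCommGroup V] [InnerProductSpace ℝ V] [CompleteSpace V]
  [NormedAddCommGroup W] [NormedSpace ℝ W]

/-- `R_V⁻¹ A*`. -/
def rieszAdjoint (A : V →L[ℝ] StrongDual ℝ W) (y : W) : V :=
  (toDual ℝ V).symm (A.flip y)

/-- The gap `δ` between `V_r` and `R_V⁻¹ A* W_r`. -/
def adjointGap (A : V →L[ℝ] StrongDual ℝ W) (Vr : Submodule ℝ V) (Wr : Submodule ℝ W) : ℝ :=
  ⨆ v : {v : Vr // (v : V) ≠ 0}, ⨅ y : Wr, ‖(v.1 : V) - rieszAdjoint A (y : W)‖ / ‖(v.1 : V)‖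

variable (A : V →L[ℝ] StrongDual ℝ W)

theorem inner_rieszAdjoint (x : V) (y : W) : ⟪x, rieszAdjoint A y⟫ = A x y := by
  rw [real_inner_comm, rieszAdjoint, toDual_symm_apply, ContinuousLinearMap.flip_apply]

theorem rieszAdjoint_smul (t : ℝ) (y : W) : rieszAdjoint A (t • y) = t • rieszAdjoint A y := by
  simp [rieszAdjoint]

theorem rieszAdjoint_zero : rieszAdjoint A (0 : W) = 0 := by
  simp [rieszAdjoint]

theorem norm_rieszAdjoint_le (y : W) : ‖rieszAdjoint A y‖ ≤ ‖A‖ * ‖y‖ := by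
  rw [rieszAdjoint, LinearIsometryEquiv.norm_map, ← ContinuousLinearMap.opNorm_flip]
  exact A.flip.le_opNorm y

variable {A} {Vr : Submodule ℝ V} {Wr : Submodule ℝ W}

theorem iInf_norm_sub_rieszAdjoint_div_le (hα : 0 < infSupConstant A Vr Wr)
    (v : Vr) (hv : (v : V) ≠ 0) :
    ⨅ y : Wr, ‖(v : V) - rieszAdjoint A (y : W)‖ / ‖(v : V)‖
      ≤ √(1 - (infSupConstant A Vr Wr / (2 * ‖A‖)) ^ 2) := by
  set α := infSupConstant A Vr Wr
  have hA := opNorm_pos_of_infSupConstant_pos hα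
  obtain ⟨y, hy⟩ := exists_lt_apply_of_lt_infSupConstant (half_pos hα).le (half_lt_self hα) v hv
  rw [← inner_rieszAdjoint] at hy
  have hinner : α / (2 * ‖A‖) * (‖(v : V)‖ * ‖rieszAdjoint A (y : W)‖)
      ≤ ⟪(v : V), rieszAdjoint A (y : W)⟫ :=
    calc α / (2 * ‖A‖) * (‖(v : V)‖ * ‖rieszAdjoint A (y : W)‖)
        ≤ α / (2 * ‖A‖) * (‖(v : V)‖ * (‖A‖ * ‖(y : W)‖)) := by
          gcongr
          exact norm_rieszAdjoint_le A _
      _ = α / 2 * (‖(v : V)‖ * ‖(y : W)‖) := by field_simp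
      _ ≤ _ := hy.le
  have hy0 : rieszAdjoint A (y : W) ≠ 0 := by
    intro h
    rw [h, inner_zero_right] at hy
    exact hy.not_ge (by positivity)
  obtain ⟨t, ht⟩ := exists_norm_sub_smul_le hy0 (by positivity) hinner
  calc ⨅ y : Wr, ‖(v : V) - rieszAdjoint A (y : W)‖ / ‖(v : V)‖
      ≤ ‖(v : V) - rieszAdjoint A ((t • y : Wr) : W)‖ / ‖(v : V)‖ := by
        refine ciInf_le ⟨0, ?_⟩ (t • y)
        rintro _ ⟨_, rfl⟩
        positivity
    _ ≤ √(1 - (α / (2 * ‖A‖)) ^ 2) := by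
        rw [Submodule.coe_smul, rieszAdjoint_smul, div_le_iff₀ (norm_pos_iff.2 hv)]
        exact ht

theorem adjointGap_nonneg : 0 ≤ adjointGap A Vr Wr :=
  Real.iSup_nonneg fun _ => Real.iInf_nonneg fun _ => by positivity

theorem adjointGap_lt_one (hα : 0 < infSupConstant A Vr Wr) : adjointGap A Vr Wr < 1 := by
  have hc : 0 < infSupConstant A Vr Wr / (2 * ‖A‖) := by
    have := opNorm_pos_of_infSupConstant_pos hα
    positivity
  calc adjointGap A Vr Wr ≤ √(1 - (infSupConstant A Vr Wr / (2 * ‖A‖)) ^ 2) :=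
        Real.iSup_le (fun v => iInf_norm_sub_rieszAdjoint_div_le hα v.1 v.2) (Real.sqrt_nonneg _)
    _ < 1 := (Real.sqrt_lt' one_pos).2 (by nlinarith)

theorem iInf_norm_sub_rieszAdjoint_div_le_adjointGap (w : Vr) (hw : (w : V) ≠ 0) :
    ⨅ y : Wr, ‖(w : V) - rieszAdjoint A (y : W)‖ / ‖(w : V)‖ ≤ adjointGap A Vr Wr := by
  unfold adjointGap
  refine le_ciSup (f := fun v : {v : Vr // (v : V) ≠ 0} =>
    ⨅ y : Wr, ‖(v.1 : V) - rieszAdjoint A (y : W)‖ / ‖(v.1 : V)‖) ?_ ⟨w, hw⟩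
  refine ⟨1, ?_⟩
  rintro _ ⟨v, rfl⟩
  calc ⨅ y : Wr, ‖(v.1 : V) - rieszAdjoint A (y : W)‖ / ‖(v.1 : V)‖
      ≤ ‖(v.1 : V) - rieszAdjoint A ((0 : Wr) : W)‖ / ‖(v.1 : V)‖ := by
        refine ciInf_le ⟨0, ?_⟩ 0
        rintro _ ⟨_, rfl⟩
        positivity
    _ = 1 := by
        rw [Submodule.coe_zero, rieszAdjoint_zero, sub_zero, div_self (norm_ne_zero_iff.2 v.2)]

theorem abs_inner_le_adjointGap_mul {e : V} (he : ∀ y ∈ Wr, A e y = 0) {w : V} (hw : w ∈ Vr) :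
    |⟪e, w⟫| ≤ adjointGap A Vr Wr * ‖e‖ * ‖w‖ := by
  rcases eq_or_ne w 0 with rfl | hw0
  · simp
  have horth : ∀ y : Wr, ⟪e, rieszAdjoint A (y : W)⟫ = 0 := fun y => by
    rw [inner_rieszAdjoint, he y y.2]
  have hdist : ⨅ y : Wr, ‖w - rieszAdjoint A (y : W)‖
      = (⨅ y : Wr, ‖w - rieszAdjoint A (y : W)‖ / ‖w‖) * ‖w‖ := by
    rw [Real.iInf_mul_of_nonneg (norm_nonneg w)]
    simp only [div_mul_cancel₀ _ (norm_ne_zero_iff.2 hw0)]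
  calc |⟪e, w⟫| ≤ ‖e‖ * ⨅ y : Wr, ‖w - rieszAdjoint A (y : W)‖ :=
        abs_inner_le_mul_iInf_norm_sub horth w
    _ ≤ ‖e‖ * (adjointGap A Vr Wr * ‖w‖) := by
        rw [hdist]
        gcongr
        exact iInf_norm_sub_rieszAdjoint_div_le_adjointGap ⟨w, hw⟩ hw0
    _ = adjointGap A Vr Wr * ‖e‖ * ‖w‖ := by ring

theorem sqrt_one_sub_sq_mul_norm_sub_le {u ur : V} (hur : ur ∈ Vr)
    (horth : ∀ y ∈ Wr, A (u - ur) y = 0) {v : V} (hv : v ∈ Vr) :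
    √(1 - adjointGap A Vr Wr ^ 2) * ‖u - ur‖ ≤ ‖u - v‖ := by
  have h := one_sub_sq_mul_norm_sq_le_norm_add_sq
    (abs_inner_le_adjointGap_mul horth (Vr.sub_mem hur hv))
  rw [sub_add_sub_cancel] at h
  calc √(1 - adjointGap A Vr Wr ^ 2) * ‖u - ur‖
      = √((1 - adjointGap A Vr Wr ^ 2) * ‖u - ur‖ ^ 2) := by
        rw [Real.sqrt_mul' _ (sq_nonneg _), Real.sqrt_sq (norm_nonneg _)]
    _ ≤ √(‖u - v‖ ^ 2) := Real.sqrt_le_sqrt h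
    _ = ‖u - v‖ := Real.sqrt_sq (norm_nonneg _)

end Adjoint

end PetrovGalerkin

open PetrovGalerkin

theorem stmt_2_general {V W : Type*}
    [NormedAddCommGroup V] [InnerProductSpace ℝ V] [CompleteSpace V]
    [NormedAddCommGroup W] [InnerProductSpace ℝ W]
    (A : V →L[ℝ] StrongDual ℝ W)
    (b : StrongDual ℝ W) (u : V) (hu : A u = b)
    (Vr : Submodule ℝ V) (Wr : Submodule ℝ W)
    (α : ℝ)
    (hαdef : α = ⨅ v : {v : Vr // (v : V) ≠ 0}, ⨆ y : {y : Wr // (y : W) ≠ 0},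
        A (v.1 : V) (y.1 : W) / (‖(v.1 : V)‖ * ‖(y.1 : W)‖))
    (hα : 0 < α)
    (ur : V) (hurm : ur ∈ Vr) (hPG : ∀ y ∈ Wr, A ur y = b y)
    (δ : ℝ)
    (hδ : δ = ⨆ v : {v : Vr // (v : V) ≠ 0}, ⨅ y : Wr,
        ‖(v.1 : V) - (toDual ℝ V).symm (A.flip (y : W))‖ / ‖(v.1 : V)‖) :
    δ < 1 ∧ ‖u - ur‖ ≤ (Real.sqrt (1 - δ ^ 2))⁻¹ * ⨅ v : Vr, ‖u - (v : V)‖ := by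
  obtain rfl : α = infSupConstant A Vr Wr := hαdef
  obtain rfl : δ = adjointGap A Vr Wr := hδ
  have hδ1 := adjointGap_lt_one hα
  have horth : ∀ y ∈ Wr, A (u - ur) y = 0 := fun y hy => by
    rw [map_sub, sub_apply, hu, hPG y hy, sub_self]
  have hδ0 : 0 ≤ adjointGap A Vr Wr := adjointGap_nonneg
  have hpos : 0 < √(1 - adjointGap A Vr Wr ^ 2) := Real.sqrt_pos.2 (by nlinarith)
  refine ⟨hδ1, (le_inv_mul_iff₀ hpos).2 ?_⟩
  exact le_ciInf fun v => sqrt_one_sub_sq_mul_norm_sub_le hurm horth v.2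

theorem stmt_2 {V W : Type*}
    [NormedAddCommGroup V] [InnerProductSpace ℝ V] [CompleteSpace V]
    [NormedAddCommGroup W] [InnerProductSpace ℝ W] [CompleteSpace W]
    (A : V →L[ℝ] StrongDual ℝ W) (hA : Function.Bijective A)
    (b : StrongDual ℝ W) (u : V) (hu : A u = b)
    (Vr : Submodule ℝ V) (Wr : Submodule ℝ W)
    [FiniteDimensional ℝ Vr] [FiniteDimensional ℝ Wr]
    (α : ℝ)
    (hαdef : α = ⨅ v : {v : Vr // (v : V) ≠ 0}, ⨆ y : {y : Wr // (y : W) ≠ 0},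
        A (v.1 : V) (y.1 : W) / (‖(v.1 : V)‖ * ‖(y.1 : W)‖))
    (hα : 0 < α)
    (ur : V) (hurm : ur ∈ Vr) (hPG : ∀ y ∈ Wr, A ur y = b y)
    (δ : ℝ)
    (hδ : δ = ⨆ v : {v : Vr // (v : V) ≠ 0}, ⨅ y : Wr,
        ‖(v.1 : V) - (toDual ℝ V).symm (A.flip (y : W))‖ / ‖(v.1 : V)‖) :
    δ < 1 ∧ ‖u - ur‖ ≤ (Real.sqrt (1 - δ ^ 2))⁻¹ * ⨅ v : Vr, ‖u - (v : V)‖ :=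
  stmt_2_general A b u hu Vr Wr α hαdef hα ur hurm hPG δ hδ
end
end

section
/- Let V, W be Hilbert spaces and A ∈ L(V, W') satisfy β := sup_{0≠v∈V} sup_{0≠w∈W} ⟨Av,w⟩/(‖v‖_V‖w‖_W) < ∞. For finite-dimensional subspaces V_r ⊆ V and W_r ⊆ W with discrete inf-sup constant α_{V_r,W_r} > 0, the constant δ_{V_r,W_r} = sup_{0≠v∈V_r} inf_{y∈W_r} ‖v − R_V⁻¹A*y‖_V/‖v‖_V satisfies δ_{V_r,W_r}² ≤ 1 − α_{V_r,W_r}²/β_{W_r}² ≤ 1 − α_{V_r,W_r}²/β², where β_{W_r} := sup_{0≠y∈W_r} ‖A*y‖_{V'}/‖y‖_W. -/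
noncomputable section
open InnerProductSpace
open scoped RealInnerProductSpace

/-!
For `v ∈ V_r` and `y ∈ W_r` we have `⟨A v, y⟩ = (v, z)_V` with `z = R_V⁻¹ A* y`, and every point
`t z` of the line through `z` is an element of `R_V⁻¹ A* W_r`, hence at distance at least
`δ(v) ‖v‖` from `v`. Projecting `v` orthogonally onto that line gives
`⟨A v, y⟩² ≤ (1 - δ(v)²) ‖v‖² ‖A* y‖² ≤ (1 - δ(v)²) β_{W_r}² ‖v‖² ‖y‖²`,
so `α² ≤ (1 - δ(v)²) β_{W_r}²` for every `v`. The second inequality is `β_{W_r} ≤ ‖A‖ = β`.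
-/

theorem real_inner_sq_le_of_forall_le_norm_sub_smul {V : Type*} [NormedAddCommGroup V]
    [InnerProductSpace ℝ V] {x z : V} {D : ℝ} (hD : 0 ≤ D) (h : ∀ t : ℝ, D ≤ ‖x - t • z‖) :
    ⟪z, x⟫ ^ 2 ≤ (‖x‖ ^ 2 - D ^ 2) * ‖z‖ ^ 2 := by
  rcases eq_or_ne z 0 with rfl | hz
  · simp
  have hz2 : 0 < ‖z‖ ^ 2 := by positivity
  -- `t` is the coefficient of the orthogonal projection of `x` onto the line `ℝ z`.
  set t := ⟪z, x⟫ / ‖z‖ ^ 2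
  have hproj : ‖x - t • z‖ ^ 2 = ‖x‖ ^ 2 - ⟪z, x⟫ ^ 2 / ‖z‖ ^ 2 := by
    rw [norm_sub_sq_real, real_inner_smul_right, norm_smul, mul_pow, Real.norm_eq_abs, sq_abs,
      real_inner_comm]
    simp only [t]
    field_simp
    ring
  have hD2 : D ^ 2 ≤ ‖x - t • z‖ ^ 2 := pow_le_pow_left₀ hD (h t) 2
  rw [hproj, le_sub_comm, div_le_iff₀ hz2] at hD2
  exact hD2

theorem Real.sq_iSup_le {ι : Sort*} [Nonempty ι] {f : ι → ℝ} {c : ℝ} (hf : ∀ i, 0 ≤ f i)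
    (h : ∀ i, f i ^ 2 ≤ c) : (⨆ i, f i) ^ 2 ≤ c := by
  obtain ⟨i⟩ := ‹Nonempty ι›
  have hc : 0 ≤ c := (sq_nonneg _).trans (h i)
  have hle : (⨆ i, f i) ≤ √c := ciSup_le fun i => (Real.le_sqrt (hf i) hc).2 (h i)
  simpa [Real.sq_sqrt hc] using pow_le_pow_left₀ (Real.iSup_nonneg hf) hle 2

theorem Real.nonempty_of_pos_iInf_iSup {ι κ : Sort*} {f : ι → κ → ℝ}
    (h : 0 < ⨅ i, ⨆ j, f i j) : Nonempty ι ∧ Nonempty κ := by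
  have hι : Nonempty ι := by
    by_contra hι
    have := not_nonempty_iff.1 hι
    simp at h
  refine ⟨hι, ?_⟩
  by_contra hκ
  have := not_nonempty_iff.1 hκ
  simp at h

theorem Real.le_ciSup_of_forall_le {ι : Sort*} {f : ι → ℝ} {C : ℝ} (h : ∀ i, f i ≤ C) (i : ι) :
    f i ≤ ⨆ i, f i :=
  le_ciSup ⟨C, Set.forall_mem_range.2 h⟩ i

theorem Real.iInf_iSup_le_iSup {ι κ : Sort*} [Nonempty κ] {f : ι → κ → ℝ} {C : ℝ}
    (h : ∀ i j, |f i j| ≤ C) (i : ι) : ⨅ i, ⨆ j, f i j ≤ ⨆ j, f i j := by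
  obtain ⟨j⟩ := ‹Nonempty κ›
  refine ciInf_le ⟨-C, Set.forall_mem_range.2 fun i => ?_⟩ i
  exact (neg_le_of_abs_le (h i j)).trans
    (Real.le_ciSup_of_forall_le (fun j => (le_abs_self _).trans (h i j)) j)

namespace ContinuousLinearMap

variable {V W : Type*} [NormedAddCommGroup V] [NormedSpace ℝ V]
  [NormedAddCommGroup W] [NormedSpace ℝ W] (B : V →L[ℝ] W →L[ℝ] ℝ)

theorem abs_apply_div_norm_mul_norm_le (v : V) (w : W) : |B v w / (‖v‖ * ‖w‖)| ≤ ‖B‖ := by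
  rw [abs_div, abs_of_nonneg (by positivity : 0 ≤ ‖v‖ * ‖w‖)]
  exact div_le_of_le_mul₀ (by positivity) (norm_nonneg B) ((B.le_opNorm₂ v w).trans_eq (by ring))

theorem norm_flip_div_norm_le (w : W) : ‖B.flip w‖ / ‖w‖ ≤ ‖B‖ :=
  (B.flip.ratio_le_opNorm w).trans_eq B.opNorm_flip

theorem opNorm_le_of_forall_apply_div_le [Nontrivial V] [Nontrivial W] {C : ℝ}
    (h : ∀ v w, v ≠ 0 → w ≠ 0 → B v w / (‖v‖ * ‖w‖) ≤ C) : ‖B‖ ≤ C := by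
  -- Replacing `v` by `-v` flips the sign of the quotient, so `C` bounds its absolute value.
  have habs : ∀ v w, v ≠ 0 → w ≠ 0 → |B v w / (‖v‖ * ‖w‖)| ≤ C := fun v w hv hw =>
    abs_le.2 ⟨neg_le.1 (by simpa [neg_div] using h (-v) w (neg_ne_zero.2 hv) hw), h v w hv hw⟩
  obtain ⟨v₀, hv₀⟩ := exists_ne (0 : V)
  obtain ⟨w₀, hw₀⟩ := exists_ne (0 : W)
  refine opNorm_le_bound₂ B ((abs_nonneg _).trans (habs v₀ w₀ hv₀ hw₀)) fun v w => ?_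
  rcases eq_or_ne v 0 with rfl | hv
  · simp
  rcases eq_or_ne w 0 with rfl | hw
  · simp
  have hpos : 0 < ‖v‖ * ‖w‖ := by positivity
  have := habs v w hv hw
  rw [abs_div, abs_of_pos hpos, div_le_iff₀ hpos] at this
  simpa [mul_assoc] using this

theorem opNorm_eq_iSup_iSup_apply_div [Nontrivial V] [Nontrivial W] :
    ‖B‖ = ⨆ v : {v : V // v ≠ 0}, ⨆ w : {w : W // w ≠ 0}, B v.1 w.1 / (‖v.1‖ * ‖w.1‖) := by
  have : Nonempty {v : V // v ≠ 0} := (exists_ne (0 : V)).elim fun v hv => ⟨⟨v, hv⟩⟩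
  have : Nonempty {w : W // w ≠ 0} := (exists_ne (0 : W)).elim fun w hw => ⟨⟨w, hw⟩⟩
  have hle : ∀ v w, B v w / (‖v‖ * ‖w‖) ≤ ‖B‖ := fun v w =>
    (le_abs_self _).trans (B.abs_apply_div_norm_mul_norm_le v w)
  refine le_antisymm (B.opNorm_le_of_forall_apply_div_le fun v w hv hw => ?_)
    (ciSup_le fun v => ciSup_le fun w => hle _ _)
  exact (Real.le_ciSup_of_forall_le (f := fun w : {w : W // w ≠ 0} => B v w.1 / (‖v‖ * ‖w.1‖))
    (fun w => hle _ _) ⟨w, hw⟩).trans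
    (Real.le_ciSup_of_forall_le (f := fun v : {v : V // v ≠ 0} => ⨆ w : {w : W // w ≠ 0},
      B v.1 w.1 / (‖v.1‖ * ‖w.1‖)) (fun v => ciSup_le fun w => hle _ _) ⟨v, hv⟩)

end ContinuousLinearMap

section InfSup

variable {V W : Type*} [NormedAddCommGroup V] [InnerProductSpace ℝ V] [CompleteSpace V]
  [NormedAddCommGroup W] [NormedSpace ℝ W] (A : V →L[ℝ] StrongDual ℝ W) (Wr : Submodule ℝ W)

/-- `δ_{V_r,W_r}` is the supremum of this quantity over the nonzero `v ∈ V_r`. -/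
def relDistAdjointImage (v : V) : ℝ :=
  ⨅ y : Wr, ‖v - (toDual ℝ V).symm (A.flip (y : W))‖ / ‖v‖

theorem relDistAdjointImage_nonneg (v : V) : 0 ≤ relDistAdjointImage A Wr v :=
  Real.iInf_nonneg fun _ => by positivity

theorem relDistAdjointImage_mul_norm_le {v : V} (hv : v ≠ 0) (y : Wr) :
    relDistAdjointImage A Wr v * ‖v‖ ≤ ‖v - (toDual ℝ V).symm (A.flip (y : W))‖ :=
  (le_div_iff₀ (norm_pos_iff.2 hv)).1 <|
    ciInf_le ⟨0, Set.forall_mem_range.2 fun _ => by positivity⟩ y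

theorem relDistAdjointImage_le_one {v : V} (hv : v ≠ 0) : relDistAdjointImage A Wr v ≤ 1 := by
  have h := relDistAdjointImage_mul_norm_le A Wr hv 0
  rw [Submodule.coe_zero, map_zero, map_zero, sub_zero] at h
  exact (mul_le_iff_le_one_left (norm_pos_iff.2 hv)).1 h

theorem apply_sq_le_one_sub_relDistAdjointImage_sq_mul {v : V} (hv : v ≠ 0) (y : Wr) :
    A v y ^ 2 ≤ (1 - relDistAdjointImage A Wr v ^ 2) * ‖v‖ ^ 2 * ‖A.flip (y : W)‖ ^ 2 := by
  set u : Wr →ₗ[ℝ] V :=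
    (toDual ℝ V).symm.toLinearEquiv.toLinearMap ∘ₗ A.flip.toLinearMap ∘ₗ Wr.subtype
  have hinner : ⟪u y, v⟫ = A v y := toDual_symm_apply
  have hnorm : ‖u y‖ = ‖A.flip (y : W)‖ := (toDual ℝ V).symm.norm_map _
  -- `t • u y = u (t • y)` lies in the image of `u`.
  have hline : ∀ t : ℝ, relDistAdjointImage A Wr v * ‖v‖ ≤ ‖v - t • u y‖ := fun t => by
    simpa [u] using relDistAdjointImage_mul_norm_le A Wr hv (t • y)
  have := real_inner_sq_le_of_forall_le_norm_sub_smul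
    (mul_nonneg (relDistAdjointImage_nonneg A Wr v) (norm_nonneg v)) hline
  rw [hinner, hnorm] at this
  linarith

theorem sq_le_one_sub_relDistAdjointImage_sq_mul {v : V} (hv : v ≠ 0) {a b : ℝ} (ha : 0 ≤ a)
    (hb : ∀ y : {y : Wr // (y : W) ≠ 0}, ‖A.flip (y.1 : W)‖ / ‖(y.1 : W)‖ ≤ b)
    (hab : a ≤ ⨆ y : {y : Wr // (y : W) ≠ 0}, A v (y.1 : W) / (‖v‖ * ‖(y.1 : W)‖)) :
    a ^ 2 ≤ (1 - relDistAdjointImage A Wr v ^ 2) * b ^ 2 := by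
  have hd : 0 ≤ 1 - relDistAdjointImage A Wr v ^ 2 := by
    nlinarith [relDistAdjointImage_nonneg A Wr v, relDistAdjointImage_le_one A Wr hv]
  have hsq : ∀ y : {y : Wr // (y : W) ≠ 0},
      (A v (y.1 : W) / (‖v‖ * ‖(y.1 : W)‖)) ^ 2 ≤ (1 - relDistAdjointImage A Wr v ^ 2) * b ^ 2 := by
    intro y
    calc (A v (y.1 : W) / (‖v‖ * ‖(y.1 : W)‖)) ^ 2
        ≤ (1 - relDistAdjointImage A Wr v ^ 2) * ‖v‖ ^ 2 * ‖A.flip (y.1 : W)‖ ^ 2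
          / (‖v‖ * ‖(y.1 : W)‖) ^ 2 := by
          rw [div_pow]
          gcongr
          exact apply_sq_le_one_sub_relDistAdjointImage_sq_mul A Wr hv y.1
      _ = (1 - relDistAdjointImage A Wr v ^ 2) * (‖A.flip (y.1 : W)‖ / ‖(y.1 : W)‖) ^ 2 := by
          field_simp
      _ ≤ (1 - relDistAdjointImage A Wr v ^ 2) * b ^ 2 := by
          gcongr
          exact hb y
  refine (Real.le_sqrt ha (by positivity)).1 <|
    hab.trans <| Real.iSup_le (fun y => ?_) (by positivity)
  exact (le_abs_self _).trans (Real.abs_le_sqrt (hsq y))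

end InfSup

theorem stmt_4_general {V W : Type*}
    [NormedAddCommGroup V] [InnerProductSpace ℝ V] [CompleteSpace V]
    [NormedAddCommGroup W] [InnerProductSpace ℝ W]
    (A : V →L[ℝ] StrongDual ℝ W)
    (Vr : Submodule ℝ V) (Wr : Submodule ℝ W)
    (α : ℝ)
    (hαdef : α = ⨅ v : {v : Vr // (v : V) ≠ 0}, ⨆ y : {y : Wr // (y : W) ≠ 0},
        A (v.1 : V) (y.1 : W) / (‖(v.1 : V)‖ * ‖(y.1 : W)‖))
    (hα : 0 < α)
    (δ : ℝ)
    (hδ : δ = ⨆ v : {v : Vr // (v : V) ≠ 0}, ⨅ y : Wr,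
        ‖(v.1 : V) - (toDual ℝ V).symm (A.flip (y : W))‖ / ‖(v.1 : V)‖)
    (βWr : ℝ)
    (hβWr : βWr = ⨆ y : {y : Wr // (y : W) ≠ 0}, ‖A.flip (y.1 : W)‖ / ‖(y.1 : W)‖)
    (β : ℝ)
    (hβ : β = ⨆ v : {v : V // v ≠ 0}, ⨆ w : {w : W // w ≠ 0},
        A v.1 w.1 / (‖v.1‖ * ‖w.1‖)) :
    δ ^ 2 ≤ 1 - α ^ 2 / βWr ^ 2 ∧ 1 - α ^ 2 / βWr ^ 2 ≤ 1 - α ^ 2 / β ^ 2 := by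
  obtain ⟨hVr, hWr⟩ := Real.nonempty_of_pos_iInf_iSup (hαdef ▸ hα)
  have hβWr_ge : ∀ y : {y : Wr // (y : W) ≠ 0}, ‖A.flip (y.1 : W)‖ / ‖(y.1 : W)‖ ≤ βWr :=
    hβWr ▸ Real.le_ciSup_of_forall_le fun y => A.norm_flip_div_norm_le (y.1 : W)
  have hα_sq : ∀ v : {v : Vr // (v : V) ≠ 0},
      α ^ 2 ≤ (1 - relDistAdjointImage A Wr (v.1 : V) ^ 2) * βWr ^ 2 := fun v =>
    sq_le_one_sub_relDistAdjointImage_sq_mul A Wr v.2 hα.le hβWr_ge <|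
      hαdef ▸ Real.iInf_iSup_le_iSup (fun _ _ => A.abs_apply_div_norm_mul_norm_le _ _) v
  have hβWr_nonneg : 0 ≤ βWr := hβWr ▸ Real.iSup_nonneg fun _ => by positivity
  have hβWr_pos : 0 < βWr ^ 2 := by
    nlinarith [hα_sq hVr.some, relDistAdjointImage_nonneg A Wr (hVr.some.1 : V)]
  have : Nontrivial V := nontrivial_of_ne _ 0 hVr.some.2
  have : Nontrivial W := nontrivial_of_ne _ 0 hWr.some.2
  have hβWr_le : βWr ≤ β := by
    rw [hβWr, hβ, ← A.opNorm_eq_iSup_iSup_apply_div]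
    exact ciSup_le fun y => A.norm_flip_div_norm_le _
  refine ⟨?_, sub_le_sub_left (div_le_div_of_nonneg_left (sq_nonneg α) hβWr_pos
    (pow_le_pow_left₀ hβWr_nonneg hβWr_le 2)) 1⟩
  rw [hδ]
  refine Real.sq_iSup_le (fun v => relDistAdjointImage_nonneg A Wr _) fun v => ?_
  rw [le_sub_comm, div_le_iff₀ hβWr_pos]
  exact hα_sq v

theorem stmt_4 {V W : Type*}
    [NormedAddCommGroup V] [InnerProductSpace ℝ V] [CompleteSpace V]
    [NormedAddCommGroup W] [InnerProductSpace ℝ W] [CompleteSpace W]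
    (A : V →L[ℝ] StrongDual ℝ W)
    (Vr : Submodule ℝ V) (Wr : Submodule ℝ W)
    [FiniteDimensional ℝ Vr] [FiniteDimensional ℝ Wr]
    (α : ℝ)
    (hαdef : α = ⨅ v : {v : Vr // (v : V) ≠ 0}, ⨆ y : {y : Wr // (y : W) ≠ 0},
        A (v.1 : V) (y.1 : W) / (‖(v.1 : V)‖ * ‖(y.1 : W)‖))
    (hα : 0 < α)
    (δ : ℝ)
    (hδ : δ = ⨆ v : {v : Vr // (v : V) ≠ 0}, ⨅ y : Wr,
        ‖(v.1 : V) - (toDual ℝ V).symm (A.flip (y : W))‖ / ‖(v.1 : V)‖)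
    (βWr : ℝ)
    (hβWr : βWr = ⨆ y : {y : Wr // (y : W) ≠ 0}, ‖A.flip (y.1 : W)‖ / ‖(y.1 : W)‖)
    (β : ℝ)
    (hβ : β = ⨆ v : {v : V // v ≠ 0}, ⨆ w : {w : W // w ≠ 0},
        A v.1 w.1 / (‖v.1‖ * ‖w.1‖)) :
    δ ^ 2 ≤ 1 - α ^ 2 / βWr ^ 2 ∧ 1 - α ^ 2 / βWr ^ 2 ≤ 1 - α ^ 2 / β ^ 2 :=
  stmt_4_general A Vr Wr α hαdef hα δ hδ βWr hβWr β hβ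
end
end

section
/- Let V, W, Z be Hilbert spaces, A ∈ L(V, W') invertible, b ∈ W', u = A⁻¹b, L ∈ L(V, Z), s = Lu, and let ũ ∈ V and Q̃ ∈ L(Z', W) be arbitrary. Define s̃ = Lũ + Q̃*(b − Aũ). Then ‖s − s̃‖_Z ≤ ‖u − ũ‖_V · ‖L* − A* Q̃‖_{Z'→V'}, where ‖L* − A* Q̃‖_{Z'→V'} = sup_{0≠z'∈Z'} ‖(L* − A* Q̃) z'‖_{V'} / ‖z'‖_{Z'}. -/
/-!
Pairing the error `L u - s̃` with a functional `z'` gives `(L* z' - A* Q̃ z')(u - ũ)`, because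
`b = A u`. Testing with a norming functional of `L u - s̃` (Hahn–Banach) then bounds its norm by
`‖u - ũ‖` times the operator norm of `L* - A* Q̃`.
-/

namespace ContinuousLinearMap

variable {𝕜 V Z : Type*} [RCLike 𝕜]
  [SeminormedAddCommGroup V] [NormedSpace 𝕜 V] [NormedAddCommGroup Z] [NormedSpace 𝕜 Z]

theorem bddAbove_range_norm_apply_div_norm (T : StrongDual 𝕜 Z →L[𝕜] StrongDual 𝕜 V) :
    BddAbove (Set.range fun z' : {z' : StrongDual 𝕜 Z // z' ≠ 0} => ‖T z'.1‖ / ‖z'.1‖) := by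
  refine ⟨‖T‖, ?_⟩
  rintro _ ⟨⟨z', hz'⟩, rfl⟩
  exact div_le_of_le_mul₀ (norm_nonneg _) (norm_nonneg T) (T.le_opNorm z')

theorem norm_le_mul_iSup_of_apply_eq (T : StrongDual 𝕜 Z →L[𝕜] StrongDual 𝕜 V) {x : Z} {v : V}
    (h : ∀ z' : StrongDual 𝕜 Z, z' x = T z' v) :
    ‖x‖ ≤ ‖v‖ * ⨆ z' : {z' : StrongDual 𝕜 Z // z' ≠ 0}, ‖T z'.1‖ / ‖z'.1‖ := by
  rcases eq_or_ne x 0 with rfl | hx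
  · rw [norm_zero]
    exact mul_nonneg (norm_nonneg _) (Real.iSup_nonneg fun _ => by positivity)
  obtain ⟨g, hg_norm, hg_x⟩ := exists_dual_vector 𝕜 x (norm_ne_zero_iff.mpr hx)
  have hg : g ≠ 0 := norm_ne_zero_iff.mp (by rw [hg_norm]; exact one_ne_zero)
  calc ‖x‖ = ‖T g v‖ := by rw [← h, hg_x, RCLike.norm_ofReal, abs_norm]
    _ ≤ ‖T g‖ * ‖v‖ := (T g).le_opNorm v
    _ = ‖v‖ * (‖T g‖ / ‖g‖) := by rw [hg_norm, div_one, mul_comm]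
    _ ≤ ‖v‖ * ⨆ z' : {z' : StrongDual 𝕜 Z // z' ≠ 0}, ‖T z'.1‖ / ‖z'.1‖ := by
      gcongr
      exact le_ciSup (bddAbove_range_norm_apply_div_norm T) ⟨g, hg⟩

end ContinuousLinearMap

theorem stmt_7_general {V W Z : Type*}
    [NormedAddCommGroup V] [InnerProductSpace ℝ V]
    [NormedAddCommGroup W] [InnerProductSpace ℝ W]
    [NormedAddCommGroup Z] [InnerProductSpace ℝ Z]
    (A : V →L[ℝ] StrongDual ℝ W)
    (b : StrongDual ℝ W) (u : V) (hu : A u = b)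
    (L : V →L[ℝ] Z) (ut : V) (Qt : StrongDual ℝ Z →L[ℝ] W)
    (st : Z) (hst : ∀ z' : StrongDual ℝ Z, z' st = z' (L ut) + (b - A ut) (Qt z')) :
    ‖L u - st‖ ≤ ‖u - ut‖ * ⨆ z' : {z' : StrongDual ℝ Z // z' ≠ 0},
        ‖(z'.1).comp L - A.flip (Qt z'.1)‖ / ‖z'.1‖ := by
  let T : StrongDual ℝ Z →L[ℝ] StrongDual ℝ V :=
    (ContinuousLinearMap.compL ℝ V Z ℝ).flip L - A.flip.comp Qt
  refine T.norm_le_mul_iSup_of_apply_eq fun z' => ?_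
  simp only [T, sub_apply, ContinuousLinearMap.flip_apply,
    ContinuousLinearMap.compL_apply, ContinuousLinearMap.coe_comp, Function.comp_apply,
    map_sub, hst, ← hu]
  ring

theorem stmt_7 {V W Z : Type*}
    [NormedAddCommGroup V] [InnerProductSpace ℝ V] [CompleteSpace V]
    [NormedAddCommGroup W] [InnerProductSpace ℝ W] [CompleteSpace W]
    [NormedAddCommGroup Z] [InnerProductSpace ℝ Z] [CompleteSpace Z]
    (A : V →L[ℝ] StrongDual ℝ W) (hA : Function.Bijective A)
    (b : StrongDual ℝ W) (u : V) (hu : A u = b)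
    (L : V →L[ℝ] Z) (ut : V) (Qt : StrongDual ℝ Z →L[ℝ] W)
    (st : Z) (hst : ∀ z' : StrongDual ℝ Z, z' st = z' (L ut) + (b - A ut) (Qt z')) :
    ‖L u - st‖ ≤ ‖u - ut‖ * ⨆ z' : {z' : StrongDual ℝ Z // z' ≠ 0},
        ‖(z'.1).comp L - A.flip (Qt z'.1)‖ / ‖z'.1‖ :=
  stmt_7_general A b u hu L ut Qt st hst
end

section
/- Let Q_k be defined by Q_k z' = argmin_{y∈W_k^Q} ‖L*z' − A*y‖_{V'}, let r = b − A u_r ∈ W', and let y_k^⊥ ∈ W_k^Q be the unique element satisfying ⟨A R_V⁻¹ A* y_k^⊥, y⟩ = ⟨r, y⟩ for all y ∈ W_k^Q. Then Q_k* r = L R_V⁻¹ A* y_k^⊥. -/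
/-!
Choosing `Q_k z'` is a least-squares problem in `V' ≅ V` (Riesz), so its residual
`z' ∘ L - A* (Q_k z')` vanishes on `R_V⁻¹ A* W_k^Q`. Testing it with `R_V⁻¹ A* y_k^⊥` gives
`z' (L R_V⁻¹ A* y_k^⊥) = ⟨A R_V⁻¹ A* y_k^⊥, Q_k z'⟩ = r (Q_k z')`.
-/

open InnerProductSpace
open scoped RealInnerProductSpace

theorem real_inner_eq_zero_of_forall_norm_le_norm_sub_smul {E : Type*} [NormedAddCommGroup E]
    [InnerProductSpace ℝ E] {d w : E} (h : ∀ t : ℝ, ‖d‖ ≤ ‖d - t • w‖) : ⟪d, w⟫_ℝ = 0 := by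
  rcases eq_or_ne w 0 with rfl | hw
  · exact inner_zero_right d
  have hw2 : 0 < ‖w‖ ^ 2 := by positivity
  set c := ⟪d, w⟫_ℝ
  -- the minimiser of `t ↦ ‖d - t • w‖` is `t = c / ‖w‖²`, where the square drops by `c² / ‖w‖²`
  set t := c / ‖w‖ ^ 2
  have hsq : ‖d‖ ^ 2 ≤ ‖d - t • w‖ ^ 2 := pow_le_pow_left₀ (norm_nonneg d) (h t) 2
  have hexpand : ‖d - t • w‖ ^ 2 = ‖d‖ ^ 2 - 2 * (t * c) + t ^ 2 * ‖w‖ ^ 2 := by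
    rw [norm_sub_sq_real, real_inner_smul_right, norm_smul, mul_pow, Real.norm_eq_abs, sq_abs]
  have htc : t * ‖w‖ ^ 2 = c := div_mul_cancel₀ c hw2.ne'
  nlinarith [sq_nonneg c]

section RieszDual

variable {V : Type*} [NormedAddCommGroup V] [InnerProductSpace ℝ V] [CompleteSpace V]

theorem apply_toDual_symm_eq_zero_of_forall_norm_sub_le (S : Submodule ℝ (StrongDual ℝ V))
    {f g : StrongDual ℝ V} (hg : g ∈ S) (hmin : ∀ y ∈ S, ‖f - g‖ ≤ ‖f - y‖)
    {h : StrongDual ℝ V} (hh : h ∈ S) : (f - g) ((toDual ℝ V).symm h) = 0 := by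
  rw [← toDual_symm_apply]
  refine real_inner_eq_zero_of_forall_norm_le_norm_sub_smul fun t => ?_
  have hline : (toDual ℝ V).symm (f - g) - t • (toDual ℝ V).symm h
      = (toDual ℝ V).symm (f - (g + t • h)) := by
    rw [sub_add_eq_sub_sub, map_sub (toDual ℝ V).symm _ (t • h),
      LinearIsometryEquiv.map_smulₛₗ, RCLike.conj_to_real]
  rw [hline, LinearIsometryEquiv.norm_map, LinearIsometryEquiv.norm_map]
  exact hmin _ (S.add_mem hg (S.smul_mem t hh))

end RieszDual

theorem stmt_10_general {V W Z : Type*}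
    [NormedAddCommGroup V] [InnerProductSpace ℝ V] [CompleteSpace V]
    [NormedAddCommGroup W] [InnerProductSpace ℝ W]
    [NormedAddCommGroup Z] [InnerProductSpace ℝ Z]
    (A : V →L[ℝ] StrongDual ℝ W)
    (L : V →L[ℝ] Z)
    (WkQ : Submodule ℝ W)
    (Qk : StrongDual ℝ Z →L[ℝ] W) (hmem : ∀ z' : StrongDual ℝ Z, Qk z' ∈ WkQ)
    (hmin : ∀ z' : StrongDual ℝ Z, ∀ y ∈ WkQ,
        ‖z'.comp L - A.flip (Qk z')‖ ≤ ‖z'.comp L - A.flip y‖)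
    (b : StrongDual ℝ W) (ur : V)
    (yk : W) (hykm : yk ∈ WkQ)
    (hyk : ∀ y ∈ WkQ, A ((toDual ℝ V).symm (A.flip yk)) y = (b - A ur) y) :
    ∀ z' : StrongDual ℝ Z, (b - A ur) (Qk z') = z' (L ((toDual ℝ V).symm (A.flip yk))) := by
  intro z'
  have horth : (z'.comp L - A.flip (Qk z')) ((toDual ℝ V).symm (A.flip yk)) = 0 := by
    refine apply_toDual_symm_eq_zero_of_forall_norm_sub_le
      (WkQ.map (A.flip : W →ₗ[ℝ] StrongDual ℝ V)) (Submodule.mem_map_of_mem (hmem z')) ?_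
      (Submodule.mem_map_of_mem hykm)
    rintro _ ⟨y, hy, rfl⟩
    exact hmin z' y hy
  rw [← hyk _ (hmem z')]
  exact (sub_eq_zero.mp horth).symm

theorem stmt_10 {V W Z : Type*}
    [NormedAddCommGroup V] [InnerProductSpace ℝ V] [CompleteSpace V]
    [NormedAddCommGroup W] [InnerProductSpace ℝ W] [CompleteSpace W]
    [NormedAddCommGroup Z] [InnerProductSpace ℝ Z] [CompleteSpace Z]
    (A : V →L[ℝ] StrongDual ℝ W) (hA : Function.Bijective A)
    (L : V →L[ℝ] Z)
    (WkQ : Submodule ℝ W) [FiniteDimensional ℝ WkQ]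
    (Qk : StrongDual ℝ Z →L[ℝ] W) (hmem : ∀ z' : StrongDual ℝ Z, Qk z' ∈ WkQ)
    (hmin : ∀ z' : StrongDual ℝ Z, ∀ y ∈ WkQ,
        ‖z'.comp L - A.flip (Qk z')‖ ≤ ‖z'.comp L - A.flip y‖)
    (b : StrongDual ℝ W) (ur : V)
    (yk : W) (hykm : yk ∈ WkQ)
    (hyk : ∀ y ∈ WkQ, A ((toDual ℝ V).symm (A.flip yk)) y = (b - A ur) y) :
    ∀ z' : StrongDual ℝ Z, (b - A ur) (Qk z') = z' (L ((toDual ℝ V).symm (A.flip yk))) :=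
  stmt_10_general A L WkQ Qk hmem hmin b ur yk hykm hyk
end

section
/- Let u_r be the Petrov-Galerkin projection of u = A⁻¹b onto V_r with test space W_r, and let Q_k be the optimal dual approximation with range in W_k^Q (characterized by ⟨L*z' − A*Q_k z', R_V⁻¹A* y⟩ = 0 for all y ∈ W_k^Q, z' ∈ Z'). Then the primal-dual estimate s̃ = L u_r + Q_k*(b − A u_r) satisfies ‖s − s̃‖_Z ≤ δ^L_{W_k^Q} · inf_{y∈W_k^Q} ‖u − u_r − R_V⁻¹A*y‖_V, where δ^L_{W_k^Q} = sup_{0≠z'∈Z'} inf_{y∈W_k^Q} ‖L*z' − A*y‖_{V'}/‖z'‖_{Z'}. -/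
/-!
Tested against `z' ∈ Z'`, the error `s - s̃` equals the dual residual `L*z' - A*Q_k z'` applied to
the primal error `u - u_r`. The dual residual annihilates `R_V⁻¹A*y` for every `y ∈ W_k^Q`, so the
primal error may be shifted by any such element, and by optimality of `Q_k` its norm is at most
`δ^L_{W_k^Q} ‖z'‖`. Hahn–Banach turns the resulting bound on every `z' (s - s̃)` into a bound on
`‖s - s̃‖`.
-/

noncomputable section
open InnerProductSpace

section DualApprox

variable {V W Z : Type*}
  [NormedAddCommGroup V] [NormedSpace ℝ V] [NormedAddCommGroup W] [NormedSpace ℝ W]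
  [NormedAddCommGroup Z] [NormedSpace ℝ Z]
  (L : V →L[ℝ] Z) (T : W →L[ℝ] StrongDual ℝ V) (S : Submodule ℝ W)

/-- The constant `δ^L_S`, with `T = A*`. -/
def dualApproxConst : ℝ :=
  ⨆ z' : {z' : StrongDual ℝ Z // z' ≠ 0}, ⨅ y : S, ‖z'.1.comp L - T y‖ / ‖z'.1‖

theorem dualApproxConst_nonneg : 0 ≤ dualApproxConst L T S :=
  Real.iSup_nonneg fun _ => Real.iInf_nonneg fun _ => by positivity

theorem bddAbove_range_iInf_norm_comp_sub_div :
    BddAbove (Set.range fun z' : {z' : StrongDual ℝ Z // z' ≠ 0} =>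
      ⨅ y : S, ‖z'.1.comp L - T y‖ / ‖z'.1‖) := by
  refine ⟨‖L‖, ?_⟩
  rintro _ ⟨⟨z', hz'⟩, rfl⟩
  have hpos : 0 < ‖z'‖ := norm_pos_iff.2 hz'
  calc ⨅ y : S, ‖z'.comp L - T y‖ / ‖z'‖ ≤ ‖z'.comp L - T (0 : S)‖ / ‖z'‖ :=
        ciInf_le ⟨0, by rintro _ ⟨y, rfl⟩; positivity⟩ 0
    _ ≤ ‖L‖ := by
        rw [div_le_iff₀ hpos, Submodule.coe_zero, map_zero, sub_zero, mul_comm]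
        exact z'.opNorm_comp_le L

variable {L T S}

theorem norm_comp_sub_le_dualApproxConst_mul {z' : StrongDual ℝ Z} {q : W}
    (hq : ∀ y ∈ S, ‖z'.comp L - T q‖ ≤ ‖z'.comp L - T y‖) :
    ‖z'.comp L - T q‖ ≤ dualApproxConst L T S * ‖z'‖ := by
  rcases eq_or_ne z' 0 with rfl | hz'
  · simpa using hq 0 S.zero_mem
  have hpos : 0 < ‖z'‖ := norm_pos_iff.2 hz'
  rw [← div_le_iff₀ hpos]
  calc ‖z'.comp L - T q‖ / ‖z'‖ ≤ ⨅ y : S, ‖z'.comp L - T y‖ / ‖z'‖ :=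
        le_ciInf fun y => div_le_div_of_nonneg_right (hq y y.2) hpos.le
    _ ≤ dualApproxConst L T S :=
        le_ciSup (bddAbove_range_iInf_norm_comp_sub_div L T S) ⟨z', hz'⟩

end DualApprox

theorem abs_apply_le_norm_mul_iInf_norm_sub {V ι : Type*} [NormedAddCommGroup V]
    [NormedSpace ℝ V] [Nonempty ι] (f : StrongDual ℝ V) (g : ι → V) (hg : ∀ i, f (g i) = 0)
    (x : V) : |f x| ≤ ‖f‖ * ⨅ i, ‖x - g i‖ := by
  rw [Real.mul_iInf_of_nonneg (norm_nonneg f)]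
  refine le_ciInf fun i => ?_
  calc |f x| = ‖f (x - g i)‖ := by rw [map_sub, hg, sub_zero, Real.norm_eq_abs]
    _ ≤ ‖f‖ * ‖x - g i‖ := f.le_opNorm _

theorem apply_sub_eq_dualResidual_apply {V W Z : Type*}
    [NormedAddCommGroup V] [NormedSpace ℝ V] [NormedAddCommGroup W] [NormedSpace ℝ W]
    [NormedAddCommGroup Z] [NormedSpace ℝ Z]
    (A : V →L[ℝ] StrongDual ℝ W) (L : V →L[ℝ] Z) (Q : StrongDual ℝ Z → W) {u ur : V} {st : Z}
    (hst : ∀ z' : StrongDual ℝ Z, z' st = z' (L ur) + (A u - A ur) (Q z'))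
    (z' : StrongDual ℝ Z) :
    z' (L u - st) = (z'.comp L - A.flip (Q z')) (u - ur) := by
  simp only [map_sub, hst, _root_.sub_apply, ContinuousLinearMap.comp_apply,
    ContinuousLinearMap.flip_apply]
  ring

theorem stmt_11_general {V W Z : Type*}
    [NormedAddCommGroup V] [InnerProductSpace ℝ V] [CompleteSpace V]
    [NormedAddCommGroup W] [InnerProductSpace ℝ W]
    [NormedAddCommGroup Z] [InnerProductSpace ℝ Z]
    (A : V →L[ℝ] StrongDual ℝ W)
    (b : StrongDual ℝ W) (u : V) (hu : A u = b)
    (L : V →L[ℝ] Z)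
    (WkQ : Submodule ℝ W)
    (ur : V)
    (Qk : StrongDual ℝ Z →L[ℝ] W)
    (hmin : ∀ z' : StrongDual ℝ Z, ∀ y ∈ WkQ,
        ‖z'.comp L - A.flip (Qk z')‖ ≤ ‖z'.comp L - A.flip y‖)
    (horth : ∀ z' : StrongDual ℝ Z, ∀ y ∈ WkQ,
        (z'.comp L - A.flip (Qk z')) ((toDual ℝ V).symm (A.flip y)) = 0)
    (st : Z) (hst : ∀ z' : StrongDual ℝ Z, z' st = z' (L ur) + (b - A ur) (Qk z'))
    (δL : ℝ)
    (hδL : δL = ⨆ z' : {z' : StrongDual ℝ Z // z' ≠ 0}, ⨅ y : WkQ,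
        ‖(z'.1).comp L - A.flip (y : W)‖ / ‖z'.1‖) :
    ‖L u - st‖ ≤ δL * ⨅ y : WkQ, ‖u - ur - (toDual ℝ V).symm (A.flip (y : W))‖ := by
  subst hu
  change δL = dualApproxConst L A.flip WkQ at hδL
  set I := ⨅ y : WkQ, ‖u - ur - (toDual ℝ V).symm (A.flip (y : W))‖
  have hI : 0 ≤ I := Real.iInf_nonneg fun _ => norm_nonneg _
  have hδ : 0 ≤ δL := hδL ▸ dualApproxConst_nonneg _ _ _
  refine NormedSpace.norm_le_dual_bound ℝ _ (mul_nonneg hδ hI) fun z' => ?_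
  calc ‖z' (L u - st)‖ = |(z'.comp L - A.flip (Qk z')) (u - ur)| := by
        rw [apply_sub_eq_dualResidual_apply A L Qk hst, Real.norm_eq_abs]
    _ ≤ ‖z'.comp L - A.flip (Qk z')‖ * I :=
        abs_apply_le_norm_mul_iInf_norm_sub _ (fun y : WkQ => (toDual ℝ V).symm (A.flip y))
          (fun y => horth z' y y.2) _
    _ ≤ δL * ‖z'‖ * I :=
        mul_le_mul_of_nonneg_right (hδL ▸ norm_comp_sub_le_dualApproxConst_mul (hmin z')) hI
    _ = δL * I * ‖z'‖ := by ring

theorem stmt_11 {V W Z : Type*}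
    [NormedAddCommGroup V] [InnerProductSpace ℝ V] [CompleteSpace V]
    [NormedAddCommGroup W] [InnerProductSpace ℝ W] [CompleteSpace W]
    [NormedAddCommGroup Z] [InnerProductSpace ℝ Z] [CompleteSpace Z]
    (A : V →L[ℝ] StrongDual ℝ W) (hA : Function.Bijective A)
    (b : StrongDual ℝ W) (u : V) (hu : A u = b)
    (L : V →L[ℝ] Z)
    (Vr : Submodule ℝ V) (Wr : Submodule ℝ W) (WkQ : Submodule ℝ W)
    [FiniteDimensional ℝ Vr] [FiniteDimensional ℝ Wr] [FiniteDimensional ℝ WkQ]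
    (ur : V) (hurm : ur ∈ Vr) (hPG : ∀ y ∈ Wr, A ur y = b y)
    (Qk : StrongDual ℝ Z →L[ℝ] W) (hmem : ∀ z' : StrongDual ℝ Z, Qk z' ∈ WkQ)
    (hmin : ∀ z' : StrongDual ℝ Z, ∀ y ∈ WkQ,
        ‖z'.comp L - A.flip (Qk z')‖ ≤ ‖z'.comp L - A.flip y‖)
    (horth : ∀ z' : StrongDual ℝ Z, ∀ y ∈ WkQ,
        (z'.comp L - A.flip (Qk z')) ((toDual ℝ V).symm (A.flip y)) = 0)
    (st : Z) (hst : ∀ z' : StrongDual ℝ Z, z' st = z' (L ur) + (b - A ur) (Qk z'))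
    (δL : ℝ)
    (hδL : δL = ⨆ z' : {z' : StrongDual ℝ Z // z' ≠ 0}, ⨅ y : WkQ,
        ‖(z'.1).comp L - A.flip (y : W)‖ / ‖z'.1‖) :
    ‖L u - st‖ ≤ δL * ⨅ y : WkQ, ‖u - ur - (toDual ℝ V).symm (A.flip (y : W))‖ :=
  stmt_11_general A b u hu L WkQ ur Qk hmin horth st hst δL hδL
end
end

section
/- Let W be equipped with the norm ‖y‖_W = ‖A*y‖_{V'} (equivalently R_W = A R_V⁻¹ A*). Then for any v ∈ V and the exact solution u = A⁻¹b, ‖u − v‖_V = sup_{0≠y∈W} ⟨Av − b, y⟩ / ‖y‖_W, so that min_{v∈V_r} ‖u − v‖_V = min_{v∈V_r} sup_{0≠y∈W} ⟨Av − b, y⟩/‖y‖_W. -/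
noncomputable section
open InnerProductSpace
open scoped RealInnerProductSpace

/-!
Since `A` is an isomorphism and `W` is reflexive, `A* = A.flip : W → V'` is onto, so as `y` ranges
over `W \ {0}` the functional `A* y` ranges over all of `V'` (the residual `(A v - b) y` being
`A* y (v - u)`). The dual-norm supremum `sup_f f (v - u) / ‖f‖` is at most `‖v - u‖` and is attained
at the Riesz representative `f = ⟪v - u, ·⟫`.
-/

theorem surjective_inclusionInDoubleDual {W : Type*}
    [NormedAddCommGroup W] [InnerProductSpace ℝ W] [CompleteSpace W] :
    Function.Surjective (NormedSpace.inclusionInDoubleDual ℝ W) := by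
  intro Φ
  refine ⟨(toDual ℝ W).symm (Φ.comp (toDual ℝ W).toContinuousLinearEquiv.toContinuousLinearMap), ?_⟩
  ext g
  rw [NormedSpace.dual_def, ← toDual_symm_apply, real_inner_comm, toDual_symm_apply]
  simp

theorem ContinuousLinearMap.flip_surjective_of_bijective {V W : Type*}
    [NormedAddCommGroup V] [NormedSpace ℝ V] [CompleteSpace V]
    [NormedAddCommGroup W] [InnerProductSpace ℝ W] [CompleteSpace W]
    (A : V →L[ℝ] StrongDual ℝ W) (hA : Function.Bijective A) :
    Function.Surjective A.flip := by
  intro f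
  let e := ContinuousLinearEquiv.ofBijective A (LinearMap.ker_eq_bot.mpr hA.1)
    (LinearMap.range_eq_top.mpr hA.2)
  obtain ⟨y, hy⟩ := surjective_inclusionInDoubleDual (f.comp (e.symm : StrongDual ℝ W →L[ℝ] V))
  refine ⟨y, ContinuousLinearMap.ext fun x => ?_⟩
  simpa [NormedSpace.dual_def, e] using congrArg (fun Φ => Φ (A x)) hy

theorem norm_eq_iSup_apply_div_norm {E ι : Type*}
    [NormedAddCommGroup E] [InnerProductSpace ℝ E]
    (φ : ι → StrongDual ℝ E) (w : E) (hw : w ≠ 0 → ∃ i, φ i = innerSL ℝ w) :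
    ‖w‖ = ⨆ i, φ i w / ‖φ i‖ := by
  rcases eq_or_ne w 0 with rfl | hw0
  · simp
  obtain ⟨i₀, hi₀⟩ := hw hw0
  have : Nonempty ι := ⟨i₀⟩
  have hle : ∀ i, φ i w / ‖φ i‖ ≤ ‖w‖ := fun i =>
    div_le_of_le_mul₀ (norm_nonneg _) (norm_nonneg _)
      (by rw [mul_comm]; exact (le_abs_self _).trans ((φ i).le_opNorm w))
  refine le_antisymm (le_ciSup_of_le ⟨_, Set.forall_mem_range.mpr hle⟩ i₀ ?_) (ciSup_le hle)
  rw [hi₀, innerSL_apply_norm, innerSL_apply_apply, real_inner_self_eq_norm_mul_norm,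
    mul_div_cancel_right₀ _ (norm_ne_zero_iff.mpr hw0)]

theorem stmt_12_general {V W : Type*}
    [NormedAddCommGroup V] [InnerProductSpace ℝ V] [CompleteSpace V]
    [NormedAddCommGroup W] [InnerProductSpace ℝ W] [CompleteSpace W]
    (A : V →L[ℝ] StrongDual ℝ W) (hA : Function.Bijective A)
    (b : StrongDual ℝ W) (u : V) (hu : A u = b)
    (Vr : Submodule ℝ V) :
    (∀ v : V, ‖u - v‖ = ⨆ y : {y : W // y ≠ 0}, (A v - b) y.1 / ‖A.flip y.1‖) ∧
    (⨅ v : Vr, ‖u - (v : V)‖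
      = ⨅ v : Vr, ⨆ y : {y : W // y ≠ 0}, (A (v : V) - b) y.1 / ‖A.flip y.1‖) := by
  have error_eq : ∀ v : V, ‖u - v‖ = ⨆ y : {y : W // y ≠ 0}, (A v - b) y.1 / ‖A.flip y.1‖ := by
    intro v
    have residual_eq : ∀ y : W, (A v - b) y = A.flip y (v - u) := by
      simp [← hu]
    simp only [residual_eq]
    rw [← norm_neg, neg_sub]
    refine norm_eq_iSup_apply_div_norm _ _ fun hvu => ?_
    obtain ⟨y, hy⟩ := A.flip_surjective_of_bijective hA (innerSL ℝ (v - u))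
    refine ⟨⟨y, ?_⟩, hy⟩
    rintro rfl
    exact hvu (norm_eq_zero.mp (by rw [← innerSL_apply_norm ℝ, ← hy, map_zero, norm_zero]))
  exact ⟨error_eq, iInf_congr fun v => error_eq v⟩

theorem stmt_12 {V W : Type*}
    [NormedAddCommGroup V] [InnerProductSpace ℝ V] [CompleteSpace V]
    [NormedAddCommGroup W] [InnerProductSpace ℝ W] [CompleteSpace W]
    (A : V →L[ℝ] StrongDual ℝ W) (hA : Function.Bijective A)
    (b : StrongDual ℝ W) (u : V) (hu : A u = b)
    (Vr : Submodule ℝ V) [FiniteDimensional ℝ Vr] :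
    (∀ v : V, ‖u - v‖ = ⨆ y : {y : W // y ≠ 0}, (A v - b) y.1 / ‖A.flip y.1‖) ∧
    (⨅ v : Vr, ‖u - (v : V)‖
      = ⨅ v : Vr, ⨆ y : {y : W // y ≠ 0}, (A (v : V) - b) y.1 / ‖A.flip y.1‖) :=
  stmt_12_general A hA b u hu Vr
end
end

section
/- Under the setting of the saddle point method (R_W = A R_V⁻¹A*, discrete inf-sup constant α_{V_r,T_p} > 0), the component u_{r,p} of the saddle point solution satisfies ‖u − u_{r,p}‖_V ≤ (1 − δ_{V_r,T_p}²)^{-1/2} · min_{v∈V_r} ‖u − v‖_V, where δ_{V_r,T_p} = max_{0≠v∈V_r} min_{y∈T_p} ‖v − R_V⁻¹A*y‖_V/‖v‖_V satisfies δ_{V_r,T_p}² = 1 − α_{V_r,T_p}² < 1. -/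
noncomputable section
open InnerProductSpace
open scoped RealInnerProductSpace

/-! Let `S = R_V⁻¹A*(T_p)` and let `Q` be the orthogonal projection onto `S`. Since
`A v y = ⟪R_V⁻¹A* y, v⟫`, the inner supremum defining `α` is `‖Q v‖ / ‖v‖` and the inner infimum
defining `δ` is `‖v - Q v‖ / ‖v‖`, so Pythagoras gives `δ² = 1 - α²`.

The saddle point equations say `Q (u - u_{r,p}) = R_V⁻¹A* y_{r,p} ⊥ V_r`. For `e = u - u_{r,p}`
and `w = P_{V_r} e` this gives `‖w‖² = ⟪w - Q w, e - Q e⟫ ≤ δ ‖w‖ ‖e‖`, i.e. `‖w‖ ≤ δ ‖e‖`.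
As `e - w = u - P_{V_r} u`, Pythagoras yields `(1 - δ²) ‖e‖² ≤ ‖u - P_{V_r} u‖²`. -/

open NNReal in
lemma Real.iInf_pow {ι : Type*} [Nonempty ι] {f : ι → ℝ} (hf : ∀ i, 0 ≤ f i) (n : ℕ) :
    (⨅ i, f i) ^ n = ⨅ i, f i ^ n := by
  lift f to ι → ℝ≥0 using hf
  rcases eq_or_ne n 0 with rfl | hn
  · simp
  · simp only [← NNReal.coe_iInf, ← NNReal.coe_pow]
    exact congrArg _ ((NNReal.powOrderIso n hn).map_ciInf (OrderBot.bddBelow _))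

lemma sq_iSup_eq_one_sub_sq_iInf {ι : Type*} [Nonempty ι] {g h : ι → ℝ} (hg : ∀ i, 0 ≤ g i)
    (hh : ∀ i, 0 ≤ h i) (hgh : ∀ i, g i ^ 2 + h i ^ 2 = 1) :
    (⨆ i, h i) ^ 2 = 1 - (⨅ i, g i) ^ 2 := by
  have hbdd : BddBelow (Set.range fun i => g i ^ 2) := ⟨0, by rintro _ ⟨i, rfl⟩; positivity⟩
  rw [Real.iSup_pow hh, Real.iInf_pow hg,
    Antitone.map_ciInf_of_continuousAt (f := fun t : ℝ => 1 - t) (by fun_prop)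
      (fun a b hab => by linarith) hbdd]
  exact iSup_congr fun i => by linarith [hgh i]

namespace Submodule

variable {E : Type*} [NormedAddCommGroup E] [InnerProductSpace ℝ E]

lemma norm_sq_eq_norm_sq_starProjection_add_norm_sq_sub (K : Submodule ℝ E)
    [K.HasOrthogonalProjection] (x : E) :
    ‖x‖ ^ 2 = ‖K.starProjection x‖ ^ 2 + ‖x - K.starProjection x‖ ^ 2 := by
  simpa using K.norm_sq_eq_add_norm_sq_starProjection x

lemma norm_sub_starProjection_le (K : Submodule ℝ E) [K.HasOrthogonalProjection] (x : E) :
    ‖x - K.starProjection x‖ ≤ ‖x‖ := by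
  simpa using Kᗮ.norm_starProjection_apply_le x

lemma iSup_inner_div_eq_norm_starProjection_div (K : Submodule ℝ E) [K.HasOrthogonalProjection]
    {ι : Type*} [Nonempty ι] (f : ι → K) (hf : ∀ x : K, x ≠ 0 → ∃ i, f i = x) (v : E) :
    ⨆ i, ⟪(f i : E), v⟫ / (‖v‖ * ‖f i‖) = ‖K.starProjection v‖ / ‖v‖ := by
  set P := K.orthogonalProjectionOnto v
  have hinner : ∀ i, ⟪(f i : E), v⟫ = ⟪f i, P⟫ := fun i => by
    rw [coe_inner, ← starProjection_apply, ← inner_starProjection_left_eq_right,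
      starProjection_mem_subspace_eq_self]
  have hle : ∀ i, ⟪(f i : E), v⟫ / (‖v‖ * ‖f i‖) ≤ ‖P‖ / ‖v‖ := fun i => by
    rw [mul_comm, ← div_div, hinner]
    gcongr
    exact div_le_of_le_mul₀ (norm_nonneg _) (norm_nonneg _)
      ((real_inner_le_norm _ _).trans_eq (mul_comm _ _))
  rw [starProjection_apply]
  change _ = ‖P‖ / ‖v‖
  refine le_antisymm (ciSup_le hle) ?_
  have hbdd : BddAbove (Set.range _) := ⟨_, Set.forall_mem_range.2 hle⟩
  by_cases hP : P = 0
  · obtain ⟨i⟩ := ‹Nonempty ι›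
    exact le_ciSup_of_le hbdd i (by simp [hinner, hP])
  · obtain ⟨i, hi⟩ := hf _ hP
    refine le_ciSup_of_le hbdd i (le_of_eq ?_)
    have : ‖P‖ ≠ 0 := norm_ne_zero_iff.2 hP
    rw [hinner, hi, real_inner_self_eq_norm_sq]
    field_simp

lemma iInf_norm_sub_div_eq_norm_sub_starProjection_div (K : Submodule ℝ E)
    [K.HasOrthogonalProjection] {ι : Type*} [Nonempty ι] {f : ι → K}
    (hf : Function.Surjective f) (v : E) :
    ⨅ i, ‖v - f i‖ / ‖v‖ = ‖v - K.starProjection v‖ / ‖v‖ := by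
  rw [starProjection_minimal, ← hf.iInf_comp (fun x : K => ‖v - x‖),
    Monotone.map_ciInf_of_continuousAt (f := (· / ‖v‖)) (by fun_prop)
      (fun a b hab => div_le_div_of_nonneg_right hab (norm_nonneg v))
      ⟨0, by rintro _ ⟨i, rfl⟩; positivity⟩]

theorem norm_starProjection_le_of_starProjection_mem_orthogonal {K S : Submodule ℝ E}
    [K.HasOrthogonalProjection] [S.HasOrthogonalProjection] {δ : ℝ} (hδ0 : 0 ≤ δ)
    (hδ : ∀ x ∈ K, ‖x - S.starProjection x‖ ≤ δ * ‖x‖) {e : E}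
    (he : S.starProjection e ∈ Kᗮ) :
    ‖K.starProjection e‖ ≤ δ * ‖e‖ := by
  set w := K.starProjection e
  have hwK : w ∈ K := K.starProjection_apply_mem e
  have key : ‖w‖ * ‖w‖ ≤ ‖w‖ * (δ * ‖e‖) := calc
    ‖w‖ * ‖w‖ = ⟪w, e⟫ := by
      rw [← real_inner_self_eq_norm_mul_norm]
      exact (K.inner_starProjection_left_eq_right e w).trans
        (by rw [starProjection_eq_self_iff.2 hwK, real_inner_comm])
    _ = ⟪w, e - S.starProjection e⟫ := by
      rw [inner_sub_right, inner_right_of_mem_orthogonal hwK he, sub_zero]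
    _ = ⟪w - S.starProjection w, e - S.starProjection e⟫ := by
      rw [inner_sub_left, inner_right_of_mem_orthogonal (S.starProjection_apply_mem w)
        (S.sub_starProjection_mem_orthogonal e), sub_zero]
    _ ≤ ‖w - S.starProjection w‖ * ‖e - S.starProjection e‖ := real_inner_le_norm _ _
    _ ≤ δ * ‖w‖ * ‖e‖ :=
      mul_le_mul (hδ w hwK) (S.norm_sub_starProjection_le e) (norm_nonneg _) (by positivity)
    _ = ‖w‖ * (δ * ‖e‖) := by ring
  rcases (norm_nonneg w).eq_or_lt with hw | hw
  · rw [← hw]; positivity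
  · exact le_of_mul_le_mul_left key hw


theorem norm_sub_le_inv_sqrt_mul_iInf_norm_sub {K S : Submodule ℝ E}
    [K.HasOrthogonalProjection] [S.HasOrthogonalProjection] {δ : ℝ} (hδ0 : 0 ≤ δ)
    (hδ1 : δ ^ 2 < 1) (hδ : ∀ x ∈ K, ‖x - S.starProjection x‖ ≤ δ * ‖x‖) {u w : E} (hw : w ∈ K)
    (hS : S.starProjection (u - w) ∈ Kᗮ) :
    ‖u - w‖ ≤ (√(1 - δ ^ 2))⁻¹ * ⨅ v : K, ‖u - v‖ := by
  have hsub : u - w - K.starProjection (u - w) = u - K.starProjection u := by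
    rw [map_sub, starProjection_eq_self_iff.2 hw]; abel
  have hpyth := K.norm_sq_eq_norm_sq_starProjection_add_norm_sq_sub (u - w)
  rw [hsub] at hpyth
  have hproj := pow_le_pow_left₀ (norm_nonneg _)
    (norm_starProjection_le_of_starProjection_mem_orthogonal hδ0 hδ hS) 2
  have h1δ : 0 < 1 - δ ^ 2 := by linarith
  rw [← starProjection_minimal, inv_mul_eq_div, le_div_iff₀ (Real.sqrt_pos.2 h1δ),
    ← pow_le_pow_iff_left₀ (by positivity) (norm_nonneg _) two_ne_zero, mul_pow,
    Real.sq_sqrt h1δ.le]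
  rw [mul_pow] at hproj
  linarith

lemma norm_sub_starProjection_le_iSup_mul {K : Submodule ℝ E} (S : Submodule ℝ E)
    [S.HasOrthogonalProjection] {x : E} (hx : x ∈ K) :
    ‖x - S.starProjection x‖ ≤
      (⨆ v : {v : K // (v : E) ≠ 0}, ‖(v.1 : E) - S.starProjection v.1‖ / ‖(v.1 : E)‖) * ‖x‖ := by
  rcases eq_or_ne x 0 with rfl | hx0
  · simp
  rw [← div_le_iff₀ (norm_pos_iff.2 hx0)]
  refine le_ciSup (f := fun v : {v : K // (v : E) ≠ 0} =>
    ‖(v.1 : E) - S.starProjection v.1‖ / ‖(v.1 : E)‖) ⟨1, ?_⟩ ⟨⟨x, hx⟩, hx0⟩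
  rintro _ ⟨v, rfl⟩
  exact div_le_one_of_le₀ (S.norm_sub_starProjection_le _) (norm_nonneg _)

lemma sq_iSup_norm_sub_starProjection_div (K S : Submodule ℝ E) [S.HasOrthogonalProjection]
    [Nonempty {v : K // (v : E) ≠ 0}] :
    (⨆ v : {v : K // (v : E) ≠ 0}, ‖(v.1 : E) - S.starProjection v.1‖ / ‖(v.1 : E)‖) ^ 2 =
      1 - (⨅ v : {v : K // (v : E) ≠ 0}, ‖S.starProjection v.1‖ / ‖(v.1 : E)‖) ^ 2 := by
  refine sq_iSup_eq_one_sub_sq_iInf (fun _ => by positivity) (fun _ => by positivity) fun v => ?_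
  have hv : ‖(v.1 : E)‖ ^ 2 ≠ 0 := pow_ne_zero 2 (norm_ne_zero_iff.2 v.2)
  rw [div_pow, div_pow, ← add_div, ← S.norm_sq_eq_norm_sq_starProjection_add_norm_sq_sub,
    div_self hv]

end Submodule

section SaddlePoint

variable {V W : Type*} [NormedAddCommGroup V] [InnerProductSpace ℝ V] [CompleteSpace V]
  [NormedAddCommGroup W] [NormedSpace ℝ W]

/-- The operator `R_V⁻¹ A* : W → V` of the paper. -/
def rieszAdjoint (A : V →L[ℝ] StrongDual ℝ W) : W →ₗ[ℝ] V where
  toFun y := (toDual ℝ V).symm (A.flip y)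
  map_add' _ _ := by simp
  map_smul' _ _ := by simp

variable (A : V →L[ℝ] StrongDual ℝ W)

lemma inner_rieszAdjoint_apply (y : W) (x : V) : ⟪rieszAdjoint A y, x⟫ = A x y := by
  simp [rieszAdjoint, toDual_symm_apply]

lemma norm_rieszAdjoint_apply (y : W) : ‖rieszAdjoint A y‖ = ‖A.flip y‖ :=
  (toDual ℝ V).symm.norm_map _

variable {A} {Tp : Submodule ℝ W}

lemma iSup_apply_div_eq_norm_starProjection_map_div
    [(Tp.map (rieszAdjoint A)).HasOrthogonalProjection] [Nonempty {y : Tp // (y : W) ≠ 0}] (v : V) :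
    ⨆ y : {y : Tp // (y : W) ≠ 0}, A v (y.1 : W) / (‖v‖ * ‖A.flip (y.1 : W)‖) =
      ‖(Tp.map (rieszAdjoint A)).starProjection v‖ / ‖v‖ := by
  have hsurj (x : Tp.map (rieszAdjoint A)) (hx : x ≠ 0) :
      ∃ y : {y : Tp // (y : W) ≠ 0}, (rieszAdjoint A).submoduleMap Tp y.1 = x := by
    obtain ⟨z, rfl⟩ := (rieszAdjoint A).submoduleMap_surjective Tp x
    refine ⟨⟨z, fun hz => hx ?_⟩, rfl⟩
    rw [show z = 0 from Subtype.ext hz, map_zero]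
  rw [← Submodule.iSup_inner_div_eq_norm_starProjection_div _ _ hsurj]
  refine iSup_congr fun y => ?_
  rw [Submodule.coe_norm, LinearMap.submoduleMap_coe_apply, inner_rieszAdjoint_apply,
    norm_rieszAdjoint_apply]

lemma iInf_norm_sub_toDual_symm_flip_div_eq
    [(Tp.map (rieszAdjoint A)).HasOrthogonalProjection] (v : V) :
    ⨅ y : Tp, ‖v - (toDual ℝ V).symm (A.flip (y : W))‖ / ‖v‖ =
      ‖v - (Tp.map (rieszAdjoint A)).starProjection v‖ / ‖v‖ :=
  Submodule.iInf_norm_sub_div_eq_norm_sub_starProjection_div _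
    ((rieszAdjoint A).submoduleMap_surjective Tp) v

lemma starProjection_sub_eq_rieszAdjoint [(Tp.map (rieszAdjoint A)).HasOrthogonalProjection]
    {u urp : V} {yrp : W} (hyrp : yrp ∈ Tp)
    (heq : ∀ y ∈ Tp, A (rieszAdjoint A yrp) y + A urp y = A u y) :
    (Tp.map (rieszAdjoint A)).starProjection (u - urp) = rieszAdjoint A yrp := by
  refine Submodule.eq_starProjection_of_mem_of_inner_eq_zero (Submodule.mem_map_of_mem hyrp) ?_
  rintro _ ⟨z, hz, rfl⟩
  rw [real_inner_comm, inner_sub_right, inner_sub_right, inner_rieszAdjoint_apply,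
    inner_rieszAdjoint_apply, inner_rieszAdjoint_apply, ← heq z hz]
  ring

lemma rieszAdjoint_mem_orthogonal {Vr : Submodule ℝ V} {yrp : W}
    (heq : ∀ v ∈ Vr, A.flip yrp v = 0) : rieszAdjoint A yrp ∈ Vrᗮ := fun v hv => by
  rw [real_inner_comm, inner_rieszAdjoint_apply]
  exact heq v hv

end SaddlePoint

theorem stmt_14_general {V W : Type*}
    [NormedAddCommGroup V] [InnerProductSpace ℝ V] [CompleteSpace V]
    [NormedAddCommGroup W] [InnerProductSpace ℝ W]
    (A : V →L[ℝ] StrongDual ℝ W)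
    (b : StrongDual ℝ W) (u : V) (hu : A u = b)
    (Vr : Submodule ℝ V) (Tp : Submodule ℝ W)
    [FiniteDimensional ℝ Vr] [FiniteDimensional ℝ Tp]
    (α : ℝ)
    (hαdef : α = ⨅ v : {v : Vr // (v : V) ≠ 0}, ⨆ y : {y : Tp // (y : W) ≠ 0},
        A (v.1 : V) (y.1 : W) / (‖(v.1 : V)‖ * ‖A.flip (y.1 : W)‖))
    (hα : 0 < α)
    (urp : V) (hurm : urp ∈ Vr) (yrp : W) (hyrm : yrp ∈ Tp)
    (heq1 : ∀ y ∈ Tp, A ((toDual ℝ V).symm (A.flip yrp)) y + A urp y = b y)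
    (heq2 : ∀ v ∈ Vr, A.flip yrp v = 0)
    (δ : ℝ)
    (hδ : δ = ⨆ v : {v : Vr // (v : V) ≠ 0}, ⨅ y : Tp,
        ‖(v.1 : V) - (toDual ℝ V).symm (A.flip (y : W))‖ / ‖(v.1 : V)‖) :
    δ ^ 2 = 1 - α ^ 2 ∧ δ ^ 2 < 1 ∧
      ‖u - urp‖ ≤ (Real.sqrt (1 - δ ^ 2))⁻¹ * ⨅ v : Vr, ‖u - (v : V)‖ := by
  have : Nonempty {v : Vr // (v : V) ≠ 0} :=
    (isEmpty_or_nonempty _).resolve_left fun _ => by simp [hαdef] at hα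
  have : Nonempty {y : Tp // (y : W) ≠ 0} :=
    (isEmpty_or_nonempty _).resolve_left fun _ => by simp [hαdef] at hα
  set S := Tp.map (rieszAdjoint A)
  simp only [iSup_apply_div_eq_norm_starProjection_map_div] at hαdef
  simp only [iInf_norm_sub_toDual_symm_flip_div_eq] at hδ
  have hδα : δ ^ 2 = 1 - α ^ 2 := by
    rw [hδ, hαdef]
    exact Submodule.sq_iSup_norm_sub_starProjection_div Vr S
  have hδ1 : δ ^ 2 < 1 := by linarith [pow_pos hα 2]
  refine ⟨hδα, hδ1, Submodule.norm_sub_le_inv_sqrt_mul_iInf_norm_sub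
    (hδ ▸ Real.iSup_nonneg fun _ => by positivity) hδ1
    (fun x hx => hδ ▸ Submodule.norm_sub_starProjection_le_iSup_mul S hx) hurm ?_⟩
  rw [starProjection_sub_eq_rieszAdjoint hyrm fun y hy => by rw [hu]; exact heq1 y hy]
  exact rieszAdjoint_mem_orthogonal heq2

theorem stmt_14 {V W : Type*}
    [NormedAddCommGroup V] [InnerProductSpace ℝ V] [CompleteSpace V]
    [NormedAddCommGroup W] [InnerProductSpace ℝ W] [CompleteSpace W]
    (A : V →L[ℝ] StrongDual ℝ W) (hA : Function.Bijective A)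
    (b : StrongDual ℝ W) (u : V) (hu : A u = b)
    (Vr : Submodule ℝ V) (Tp : Submodule ℝ W)
    [FiniteDimensional ℝ Vr] [FiniteDimensional ℝ Tp]
    (α : ℝ)
    (hαdef : α = ⨅ v : {v : Vr // (v : V) ≠ 0}, ⨆ y : {y : Tp // (y : W) ≠ 0},
        A (v.1 : V) (y.1 : W) / (‖(v.1 : V)‖ * ‖A.flip (y.1 : W)‖))
    (hα : 0 < α)
    (urp : V) (hurm : urp ∈ Vr) (yrp : W) (hyrm : yrp ∈ Tp)
    (heq1 : ∀ y ∈ Tp, A ((toDual ℝ V).symm (A.flip yrp)) y + A urp y = b y)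
    (heq2 : ∀ v ∈ Vr, A.flip yrp v = 0)
    (δ : ℝ)
    (hδ : δ = ⨆ v : {v : Vr // (v : V) ≠ 0}, ⨅ y : Tp,
        ‖(v.1 : V) - (toDual ℝ V).symm (A.flip (y : W))‖ / ‖(v.1 : V)‖) :
    δ ^ 2 = 1 - α ^ 2 ∧ δ ^ 2 < 1 ∧
      ‖u - urp‖ ≤ (Real.sqrt (1 - δ ^ 2))⁻¹ * ⨅ v : Vr, ‖u - (v : V)‖ :=
  stmt_14_general A b u hu Vr Tp α hαdef hα urp hurm yrp hyrm heq1 heq2 δ hδ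
end
end

section
/- In the saddle point setting with R_W = A R_V⁻¹ A*, the saddle point solution (u_{r,p}, y_{r,p}) satisfies ‖u − u_{r,p} − R_V⁻¹ A* y_{r,p}‖_V ≤ ‖u − u_{r,p}‖_V. -/
/-!
Put `z = R_V⁻¹ A* y_{r,p}`, so that `⟪z, v⟫ = (A v) y_{r,p}` for all `v`. Testing the first
saddle point equation with `y = y_{r,p}` and using `A u = b` gives `⟪z, (u - u_{r,p}) - z⟫ = 0`:
`z` is orthogonal to `(u - u_{r,p}) - z`, and Pythagoras yields the bound.
-/

noncomputable section
open InnerProductSpace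
open scoped RealInnerProductSpace

theorem norm_sub_le_norm_of_inner_sub_eq_zero {E : Type*} [NormedAddCommGroup E]
    [InnerProductSpace ℝ E] {e z : E} (h : ⟪z, e - z⟫_ℝ = 0) : ‖e - z‖ ≤ ‖e‖ := by
  have hpyth := norm_add_sq_eq_norm_sq_add_norm_sq_real h
  rw [add_sub_cancel] at hpyth
  nlinarith [norm_nonneg e, norm_nonneg (e - z), mul_self_nonneg ‖z‖]

theorem stmt_15_general {V W : Type*}
    [NormedAddCommGroup V] [InnerProductSpace ℝ V] [CompleteSpace V]
    [NormedAddCommGroup W] [InnerProductSpace ℝ W]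
    (A : V →L[ℝ] StrongDual ℝ W)
    (b : StrongDual ℝ W) (u : V) (hu : A u = b)
    (Tp : Submodule ℝ W)
    (urp : V) (yrp : W) (hyrm : yrp ∈ Tp)
    (heq1 : ∀ y ∈ Tp, A ((toDual ℝ V).symm (A.flip yrp)) y + A urp y = b y) :
    ‖u - urp - (toDual ℝ V).symm (A.flip yrp)‖ ≤ ‖u - urp‖ := by
  set z := (toDual ℝ V).symm (A.flip yrp)
  have horth : ⟪z, u - urp - z⟫_ℝ = 0 := by
    rw [toDual_symm_apply, ContinuousLinearMap.flip_apply, map_sub, map_sub, hu]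
    simp only [sub_apply]
    linarith [heq1 yrp hyrm]
  exact norm_sub_le_norm_of_inner_sub_eq_zero horth

theorem stmt_15 {V W : Type*}
    [NormedAddCommGroup V] [InnerProductSpace ℝ V] [CompleteSpace V]
    [NormedAddCommGroup W] [InnerProductSpace ℝ W] [CompleteSpace W]
    (A : V →L[ℝ] StrongDual ℝ W) (hA : Function.Bijective A)
    (b : StrongDual ℝ W) (u : V) (hu : A u = b)
    (Vr : Submodule ℝ V) (Tp : Submodule ℝ W)
    [FiniteDimensional ℝ Vr] [FiniteDimensional ℝ Tp]
    (urp : V) (hurm : urp ∈ Vr) (yrp : W) (hyrm : yrp ∈ Tp)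
    (heq1 : ∀ y ∈ Tp, A ((toDual ℝ V).symm (A.flip yrp)) y + A urp y = b y)
    (heq2 : ∀ v ∈ Vr, A.flip yrp v = 0) :
    ‖u - urp - (toDual ℝ V).symm (A.flip yrp)‖ ≤ ‖u - urp‖ :=
  stmt_15_general A b u hu Tp urp yrp hyrm heq1
end
end

section
/- In the saddle point setting with R_W = A R_V⁻¹A*: if the test space T_p satisfies R_W⁻¹ A V_r ⊆ T_p (equivalently V_r ⊆ R_V⁻¹ A* T_p), then δ_{V_r,T_p} = 0 and the saddle point solution u_{r,p} coincides with the orthogonal projection of u onto V_r. -/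
noncomputable section
open InnerProductSpace
open scoped RealInnerProductSpace

/-
The test-to-trial map `y ↦ R_V⁻¹ A* y` satisfies `⟪R_V⁻¹ A* y, v⟫ = ⟨A v, y⟩`. Since every `v ∈ V_r`
is of the form `R_V⁻¹ A* y` with `y ∈ T_p`, each inner infimum defining `δ` is attained at `0`.
Testing the first saddle point equation with such a `y` and using the second one gives
`⟪u - u_{r,p}, v⟫ = ⟨A (R_V⁻¹ A* y_{r,p}), y⟩ = ⟨A* y_{r,p}, v⟩ = 0`, i.e. Galerkin orthogonality,
which characterises the orthogonal projection.
-/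

theorem Real.iSup_iInf_eq_zero {ι κ : Sort*} (f : ι → κ → ℝ) (hf_nonneg : ∀ i k, 0 ≤ f i k)
    (hf_zero : ∀ i, ∃ k, f i k = 0) : ⨆ i, ⨅ k, f i k = 0 := by
  have hinf : ∀ i, ⨅ k, f i k = 0 := fun i => by
    obtain ⟨k, hk⟩ := hf_zero i
    exact le_antisymm ((ciInf_le ⟨0, Set.forall_mem_range.2 (hf_nonneg i)⟩ k).trans_eq hk)
      (Real.iInf_nonneg (hf_nonneg i))
  simp only [hinf, Real.iSup_const_zero]

section SaddlePoint

variable {V W : Type*} [NormedAddCommGroup V] [InnerProductSpace ℝ V] [CompleteSpace V]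
  [NormedAddCommGroup W] [NormedSpace ℝ W]

theorem inner_toDual_symm_flip (A : V →L[ℝ] StrongDual ℝ W) (y : W) (v : V) :
    ⟪(toDual ℝ V).symm (A.flip y), v⟫ = A v y :=
  toDual_symm_apply

theorem inner_sub_eq_zero_of_saddlePoint (A : V →L[ℝ] StrongDual ℝ W) {u urp : V} {yrp y : W}
    {Vr : Submodule ℝ V}
    (heq1 : A ((toDual ℝ V).symm (A.flip yrp)) y + A urp y = A u y)
    (heq2 : ∀ v ∈ Vr, A.flip yrp v = 0) (hyVr : (toDual ℝ V).symm (A.flip y) ∈ Vr) :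
    ⟪u - urp, (toDual ℝ V).symm (A.flip y)⟫ = 0 := by
  calc ⟪u - urp, (toDual ℝ V).symm (A.flip y)⟫
      = A u y - A urp y := by rw [real_inner_comm, inner_toDual_symm_flip, map_sub]; rfl
    _ = A ((toDual ℝ V).symm (A.flip yrp)) y := by linarith
    _ = ⟪(toDual ℝ V).symm (A.flip yrp), (toDual ℝ V).symm (A.flip y)⟫ := by
      rw [real_inner_comm, inner_toDual_symm_flip]
    _ = 0 := by rw [inner_toDual_symm_flip]; exact heq2 _ hyVr

end SaddlePoint

theorem stmt_17_general {V W : Type*}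
    [NormedAddCommGroup V] [InnerProductSpace ℝ V] [CompleteSpace V]
    [NormedAddCommGroup W] [InnerProductSpace ℝ W]
    (A : V →L[ℝ] StrongDual ℝ W)
    (b : StrongDual ℝ W) (u : V) (hu : A u = b)
    (Vr : Submodule ℝ V) (Tp : Submodule ℝ W)
    [FiniteDimensional ℝ Vr]
    (hT : ∀ v ∈ Vr, ∃ y ∈ Tp, (toDual ℝ V).symm (A.flip y) = v)
    (urp : V) (hurm : urp ∈ Vr) (yrp : W)
    (heq1 : ∀ y ∈ Tp, A ((toDual ℝ V).symm (A.flip yrp)) y + A urp y = b y)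
    (heq2 : ∀ v ∈ Vr, A.flip yrp v = 0)
    (δ : ℝ)
    (hδ : δ = ⨆ v : {v : Vr // (v : V) ≠ 0}, ⨅ y : Tp,
        ‖(v.1 : V) - (toDual ℝ V).symm (A.flip (y : W))‖ / ‖(v.1 : V)‖) :
    δ = 0 ∧ urp = (Vr.orthogonalProjectionOnto u : V) := by
  subst hu
  constructor
  · rw [hδ]
    refine Real.iSup_iInf_eq_zero _ (fun _ _ => by positivity) fun v => ?_
    obtain ⟨y, hy, hyv⟩ := hT v.1 v.1.2
    exact ⟨⟨y, hy⟩, by simp [hyv]⟩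
  · rw [← Submodule.starProjection_apply]
    refine (Submodule.eq_starProjection_of_mem_of_inner_eq_zero hurm fun w hw => ?_).symm
    obtain ⟨y, hy, rfl⟩ := hT w hw
    exact inner_sub_eq_zero_of_saddlePoint A (heq1 y hy) heq2 hw

theorem stmt_17 {V W : Type*}
    [NormedAddCommGroup V] [InnerProductSpace ℝ V] [CompleteSpace V]
    [NormedAddCommGroup W] [InnerProductSpace ℝ W] [CompleteSpace W]
    (A : V →L[ℝ] StrongDual ℝ W) (hA : Function.Bijective A)
    (b : StrongDual ℝ W) (u : V) (hu : A u = b)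
    (Vr : Submodule ℝ V) (Tp : Submodule ℝ W)
    [FiniteDimensional ℝ Vr] [FiniteDimensional ℝ Tp]
    (hT : ∀ v ∈ Vr, ∃ y ∈ Tp, (toDual ℝ V).symm (A.flip y) = v)
    (urp : V) (hurm : urp ∈ Vr) (yrp : W) (hyrm : yrp ∈ Tp)
    (heq1 : ∀ y ∈ Tp, A ((toDual ℝ V).symm (A.flip yrp)) y + A urp y = b y)
    (heq2 : ∀ v ∈ Vr, A.flip yrp v = 0)
    (δ : ℝ)
    (hδ : δ = ⨆ v : {v : Vr // (v : V) ≠ 0}, ⨅ y : Tp,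
        ‖(v.1 : V) - (toDual ℝ V).symm (A.flip (y : W))‖ / ‖(v.1 : V)‖) :
    δ = 0 ∧ urp = (Vr.orthogonalProjectionOnto u : V) :=
  stmt_17_general A b u hu Vr Tp hT urp hurm yrp heq1 heq2 δ hδ
end
end

section
/- Let A ∈ L(V,V') be symmetric coercive with R_V = R_W = A, let V_r ⊆ T_p be finite-dimensional subspaces of V. Then the saddle point solution (u_{r,p}, y_{r,p}) satisfies: y_{r,p} ∈ T_p ∩ V_r^⊥ (orthogonality in the energy inner product), t_{r,p} := u_{r,p} + y_{r,p} is the energy-orthogonal projection of u onto T_p, u_{r,p} is the energy-orthogonal projection of u onto V_r, and y_{r,p} is the energy-orthogonal projection of u onto T_p ∩ V_r^⊥. -/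
/-!
Since the energy inner product is `⟪v, w⟫ = A v w` and `A u = b`, the saddle point equations say
`⟪y + u_r, w⟫ = ⟪u, w⟫` on `T_p` and `⟪y, v⟫ = 0` on `V_r`. Each claimed projection identity is then
the variational characterisation of the orthogonal projection: a point `x ∈ K` with
`⟪x, w⟫ = ⟪u, w⟫` for all `w ∈ K` is the projection of `u` onto `K`. For `V_r` and `T_p ∩ V_rᗮ`
the equation on `T_p` is tested against `w` and the cross term vanishes by orthogonality.
-/

open InnerProductSpace
open scoped RealInnerProductSpace

namespace Submodule

variable {E : Type*} [NormedAddCommGroup E] [InnerProductSpace ℝ E]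

theorem starProjection_eq_of_inner_eq {K : Submodule ℝ E} [K.HasOrthogonalProjection]
    {u x : E} (hx : x ∈ K) (h : ∀ w ∈ K, ⟪x, w⟫ = ⟪u, w⟫) : K.starProjection u = x :=
  eq_starProjection_of_mem_of_inner_eq_zero hx fun w hw => by
    rw [inner_sub_left, h w hw, sub_self]

section SaddlePoint

variable {Vr Tp : Submodule ℝ E} {u ur y : E}

theorem mem_inf_orthogonal_of_inner_eq_zero (hy : y ∈ Tp) (hyV : ∀ v ∈ Vr, ⟪y, v⟫ = 0) :
    y ∈ Tp ⊓ Vrᗮ :=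
  ⟨hy, (mem_orthogonal' _ _).mpr hyV⟩

theorem starProjection_eq_add_of_saddlePoint [Tp.HasOrthogonalProjection] (hVT : Vr ≤ Tp)
    (hur : ur ∈ Vr) (hy : y ∈ Tp) (hyT : ∀ w ∈ Tp, ⟪y + ur, w⟫ = ⟪u, w⟫) :
    Tp.starProjection u = ur + y :=
  starProjection_eq_of_inner_eq (Tp.add_mem (hVT hur) hy) fun w hw => by
    rw [add_comm, hyT w hw]

theorem starProjection_eq_left_of_saddlePoint [Vr.HasOrthogonalProjection] (hVT : Vr ≤ Tp)
    (hur : ur ∈ Vr) (hyT : ∀ w ∈ Tp, ⟪y + ur, w⟫ = ⟪u, w⟫) (hyV : ∀ v ∈ Vr, ⟪y, v⟫ = 0) :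
    Vr.starProjection u = ur :=
  starProjection_eq_of_inner_eq hur fun w hw => by
    rw [← hyT w (hVT hw), inner_add_left, hyV w hw, zero_add]

theorem starProjection_inf_orthogonal_eq_of_saddlePoint [(Tp ⊓ Vrᗮ).HasOrthogonalProjection]
    (hur : ur ∈ Vr) (hy : y ∈ Tp) (hyT : ∀ w ∈ Tp, ⟪y + ur, w⟫ = ⟪u, w⟫)
    (hyV : ∀ v ∈ Vr, ⟪y, v⟫ = 0) :
    (Tp ⊓ Vrᗮ).starProjection u = y :=
  starProjection_eq_of_inner_eq (mem_inf_orthogonal_of_inner_eq_zero hy hyV) fun w hw => by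
    rw [← hyT w hw.1, inner_add_left, real_inner_comm, hw.2 ur hur, add_zero]

end SaddlePoint

end Submodule

theorem stmt_18_general {V : Type*}
    [NormedAddCommGroup V] [InnerProductSpace ℝ V]
    (A : V →L[ℝ] StrongDual ℝ V)
    (hRV : ∀ v w : V, ⟪v, w⟫_ℝ = A v w)
    (b : StrongDual ℝ V) (u : V) (hu : A u = b)
    (Vr Tp : Submodule ℝ V) [FiniteDimensional ℝ Vr] [FiniteDimensional ℝ Tp]
    (hVT : Vr ≤ Tp)
    [CompleteSpace (Tp ⊓ Vrᗮ : Submodule ℝ V)]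
    (urp yrp : V) (hurm : urp ∈ Vr) (hyrm : yrp ∈ Tp)
    (heq1 : ∀ y ∈ Tp, A yrp y + A urp y = b y)
    (heq2 : ∀ v ∈ Vr, A yrp v = 0) :
    (∀ v ∈ Vr, ⟪yrp, v⟫_ℝ = 0) ∧
    yrp ∈ Tp ⊓ Vrᗮ ∧
    (Submodule.orthogonalProjectionOnto Tp u : V) = urp + yrp ∧
    (Submodule.orthogonalProjectionOnto Vr u : V) = urp ∧
    (Submodule.orthogonalProjectionOnto (Tp ⊓ Vrᗮ) u : V) = yrp := by
  have hyV : ∀ v ∈ Vr, ⟪yrp, v⟫_ℝ = 0 := fun v hv => (hRV _ _).trans (heq2 v hv)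
  have hyT : ∀ w ∈ Tp, ⟪yrp + urp, w⟫_ℝ = ⟪u, w⟫_ℝ := fun w hw => by
    rw [inner_add_left, hRV, hRV, hRV, hu, heq1 w hw]
  exact ⟨hyV, Submodule.mem_inf_orthogonal_of_inner_eq_zero hyrm hyV,
    Submodule.starProjection_eq_add_of_saddlePoint hVT hurm hyrm hyT,
    Submodule.starProjection_eq_left_of_saddlePoint hVT hurm hyT hyV,
    Submodule.starProjection_inf_orthogonal_eq_of_saddlePoint hurm hyrm hyT hyV⟩

theorem stmt_18 {V : Type*}
    [NormedAddCommGroup V] [InnerProductSpace ℝ V] [CompleteSpace V]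
    (A : V →L[ℝ] StrongDual ℝ V)
    (hsym : ∀ v w : V, A v w = A w v)
    (hcoer : ∃ c > 0, ∀ v : V, c * ‖v‖ ^ 2 ≤ A v v)
    (hRV : ∀ v w : V, ⟪v, w⟫_ℝ = A v w)
    (b : StrongDual ℝ V) (u : V) (hu : A u = b)
    (Vr Tp : Submodule ℝ V) [FiniteDimensional ℝ Vr] [FiniteDimensional ℝ Tp]
    (hVT : Vr ≤ Tp)
    [CompleteSpace (Tp ⊓ Vrᗮ : Submodule ℝ V)]
    (urp yrp : V) (hurm : urp ∈ Vr) (hyrm : yrp ∈ Tp)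
    (heq1 : ∀ y ∈ Tp, A yrp y + A urp y = b y)
    (heq2 : ∀ v ∈ Vr, A yrp v = 0) :
    (∀ v ∈ Vr, ⟪yrp, v⟫_ℝ = 0) ∧
    yrp ∈ Tp ⊓ Vrᗮ ∧
    (Submodule.orthogonalProjectionOnto Tp u : V) = urp + yrp ∧
    (Submodule.orthogonalProjectionOnto Vr u : V) = urp ∧
    (Submodule.orthogonalProjectionOnto (Tp ⊓ Vrᗮ) u : V) = yrp :=
  stmt_18_general A hRV b u hu Vr Tp hVT urp yrp hurm hyrm heq1 heq2
end

section
/- Let A ∈ L(V,V') be symmetric and coercive, ‖·‖_V the energy norm (‖v‖_V² = ⟨Av,v⟩), and ‖·‖_{V₀} another Hilbert norm on V such that α ‖v‖_{V₀} ≤ ‖Av‖_{V₀'} for all v ∈ V with α > 0. Then for every v ∈ V, ‖v‖_V ≤ α^{-1/2} ‖Av‖_{V₀'}. In particular, for u = A⁻¹b and any ũ ∈ V, ‖u − ũ‖_V ≤ α^{-1/2} ‖A ũ − b‖_{V₀'}. -/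
/-!
Testing `A v` against `v = J (J⁻¹ v)` gives
`‖v‖² = ⟨A v, v⟩ ≤ ‖(A v) ∘ J‖ ‖J⁻¹ v‖ ≤ α⁻¹ ‖(A v) ∘ J‖²`,
the last step by the inf-sup bound. The a posteriori estimate is the case `v = u - ũ`,
for which `A v = b - A ũ`.
-/

noncomputable section
open InnerProductSpace
open scoped RealInnerProductSpace

lemma le_inv_sqrt_mul_of_sq_le_inv_mul_sq {x c α : ℝ} (hx : 0 ≤ x) (hc : 0 ≤ c) (hα : 0 < α)
    (h : x ^ 2 ≤ α⁻¹ * c ^ 2) : x ≤ (Real.sqrt α)⁻¹ * c := by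
  have hsq : x ^ 2 ≤ ((Real.sqrt α)⁻¹ * c) ^ 2 := by
    rwa [mul_pow, inv_pow, Real.sq_sqrt hα.le]
  exact (pow_le_pow_iff_left₀ hx (by positivity) two_ne_zero).mp hsq

section EnergyEstimate

variable {V E : Type*} [NormedAddCommGroup V] [NormedSpace ℝ V]
  [NormedAddCommGroup E] [NormedSpace ℝ E]
  (A : V →L[ℝ] StrongDual ℝ V) (J : E ≃L[ℝ] V) {α : ℝ}

theorem norm_le_inv_sqrt_mul_norm_comp (henergy : ∀ v, ‖v‖ ^ 2 ≤ A v v) (hα : 0 < α)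
    (hbound : ∀ v, α * ‖J.symm v‖ ≤ ‖(A v).comp (J : E →L[ℝ] V)‖) (v : V) :
    ‖v‖ ≤ (Real.sqrt α)⁻¹ * ‖(A v).comp (J : E →L[ℝ] V)‖ := by
  set r := ‖(A v).comp (J : E →L[ℝ] V)‖
  have hJ : ‖J.symm v‖ ≤ α⁻¹ * r := (le_inv_mul_iff₀ hα).mpr (hbound v)
  refine le_inv_sqrt_mul_of_sq_le_inv_mul_sq (norm_nonneg v) (norm_nonneg _) hα ?_
  calc ‖v‖ ^ 2 ≤ A v v := henergy v
    _ = (A v).comp (J : E →L[ℝ] V) (J.symm v) := by simp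
    _ ≤ r * ‖J.symm v‖ := (le_abs_self _).trans (((A v).comp (J : E →L[ℝ] V)).le_opNorm _)
    _ ≤ r * (α⁻¹ * r) := by gcongr
    _ = α⁻¹ * r ^ 2 := by ring

theorem norm_sub_le_inv_sqrt_mul_norm_residual (henergy : ∀ v, ‖v‖ ^ 2 ≤ A v v) (hα : 0 < α)
    (hbound : ∀ v, α * ‖J.symm v‖ ≤ ‖(A v).comp (J : E →L[ℝ] V)‖)
    {b : StrongDual ℝ V} {u : V} (hu : A u = b) (ut : V) :
    ‖u - ut‖ ≤ (Real.sqrt α)⁻¹ * ‖(A ut - b).comp (J : E →L[ℝ] V)‖ := by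
  have hres : (A (u - ut)).comp (J : E →L[ℝ] V) = -(A ut - b).comp (J : E →L[ℝ] V) := by
    rw [map_sub, hu, ← neg_sub, ContinuousLinearMap.neg_comp]
  simpa only [hres, norm_neg] using norm_le_inv_sqrt_mul_norm_comp A J henergy hα hbound (u - ut)

end EnergyEstimate

theorem stmt_19_general {V : Type*}
    [NormedAddCommGroup V] [InnerProductSpace ℝ V] {E : Type*}
    [NormedAddCommGroup E] [InnerProductSpace ℝ E]
    (A : V →L[ℝ] StrongDual ℝ V)
    (hRV : ∀ v w : V, ⟪v, w⟫_ℝ = A v w)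
    (J : E ≃L[ℝ] V)
    (α : ℝ) (hα : 0 < α)
    (hbound : ∀ v : V, α * ‖J.symm v‖ ≤ ‖(A v).comp (J : E →L[ℝ] V)‖) :
    (∀ v : V, ‖v‖ ≤ (Real.sqrt α)⁻¹ * ‖(A v).comp (J : E →L[ℝ] V)‖) ∧
    ∀ (b : StrongDual ℝ V) (u ut : V), A u = b →
      ‖u - ut‖ ≤ (Real.sqrt α)⁻¹ * ‖(A ut - b).comp (J : E →L[ℝ] V)‖ := by
  have henergy : ∀ v : V, ‖v‖ ^ 2 ≤ A v v := fun v =>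
    ((real_inner_self_eq_norm_sq v).symm.trans (hRV v v)).le
  exact ⟨norm_le_inv_sqrt_mul_norm_comp A J henergy hα hbound,
    fun _ _ ut hu => norm_sub_le_inv_sqrt_mul_norm_residual A J henergy hα hbound hu ut⟩

theorem stmt_19 {V : Type*}
    [NormedAddCommGroup V] [InnerProductSpace ℝ V] [CompleteSpace V] {E : Type*}
    [NormedAddCommGroup E] [InnerProductSpace ℝ E] [CompleteSpace E]
    (A : V →L[ℝ] StrongDual ℝ V)
    (hsym : ∀ v w : V, A v w = A w v)
    (hcoer : ∃ c > 0, ∀ v : V, c * ‖v‖ ^ 2 ≤ A v v)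
    (hRV : ∀ v w : V, ⟪v, w⟫_ℝ = A v w)
    (J : E ≃L[ℝ] V)
    (α : ℝ) (hα : 0 < α)
    (hbound : ∀ v : V, α * ‖J.symm v‖ ≤ ‖(A v).comp (J : E →L[ℝ] V)‖) :
    (∀ v : V, ‖v‖ ≤ (Real.sqrt α)⁻¹ * ‖(A v).comp (J : E →L[ℝ] V)‖) ∧
    ∀ (b : StrongDual ℝ V) (u ut : V), A u = b →
      ‖u - ut‖ ≤ (Real.sqrt α)⁻¹ * ‖(A ut - b).comp (J : E →L[ℝ] V)‖ :=
  stmt_19_general A hRV J α hα hbound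
end
end
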